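/- arXiv:2605.03267 — 4 statements merged into one kernel-verified Lean document; each statement's English description precedes it below -/
import Mathlib

section
/- Let M₁,…,M_m and Y be random variables on a probability space, each taking values in a finite type, and suppose M₁,…,M_m are mutually independent. Then 0 ≤ I((M₁,…,M_m);Y) − Σ_{i=1}^m I(M_i;Y) ≤ I((M₁,…,M_m);Y). (Nonnegativity of source-side synergy: the synergy Syn := I((M₁,…,M_m);Y) − Σ_i I(M_i;Y) satisfies 0 ≤ Syn ≤ I((M₁,…,M_m);Y).) -/
open MeasureTheory Finset

/-- Probability that the random variable `X` takes the value `s` under `μ`. -/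
noncomputable def pr {Ω : Type*} [MeasurableSpace Ω] (μ : Measure Ω)
    {S : Type*} (X : Ω → S) (s : S) : ℝ :=
  (μ {ω | X ω = s}).toReal

/-- Shannon entropy (natural log) of a finite-valued random variable. -/
noncomputable def finEntropy {Ω : Type*} [MeasurableSpace Ω] (μ : Measure Ω)
    {S : Type*} [Fintype S] (X : Ω → S) : ℝ :=
  -∑ s : S, pr μ X s * Real.log (pr μ X s)

/-- Mutual information `I(X;Y) = H(X) + H(Y) - H((X,Y))`. -/
noncomputable def mutInfo {Ω : Type*} [MeasurableSpace Ω] (μ : Measure Ω)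
    {S T : Type*} [Fintype S] [Fintype T] (X : Ω → S) (Y : Ω → T) : ℝ :=
  finEntropy μ X + finEntropy μ Y - finEntropy μ (fun ω => (X ω, Y ω))


lemma aux_pr_nonneg {Ω : Type*} [MeasurableSpace Ω] (μ : Measure Ω) {S : Type*} (X : Ω → S)
    (s : S) : 0 ≤ pr μ X s := ENNReal.toReal_nonneg

lemma aux_sum_pr {Ω : Type*} [MeasurableSpace Ω] (μ : Measure Ω) [IsProbabilityMeasure μ]
    {S : Type*} [Fintype S] (X : Ω → S) (hX : ∀ s, MeasurableSet {ω | X ω = s}) :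
    ∑ s, pr μ X s = 1 := by
  classical
  have hdisj : Pairwise (Function.onFun Disjoint (fun s => {ω | X ω = s})) := by
    intro a b hab
    simp only [Function.onFun, Set.disjoint_left, Set.mem_setOf_eq]
    rintro ω rfl h
    exact hab h
  have hU : ⋃ s, {ω | X ω = s} = Set.univ := by ext ω; simp
  have h1 := MeasureTheory.measure_iUnion (μ := μ) hdisj hX
  rw [hU, measure_univ, tsum_fintype] at h1
  have h2 : ((∑ s, μ {ω | X ω = s}).toReal : ℝ) = ∑ s, pr μ X s :=
    ENNReal.toReal_sum (fun a _ => measure_ne_top μ _)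
  rw [← h2, ← h1]
  simp

lemma aux_pr_comp {Ω : Type*} [MeasurableSpace Ω] (μ : Measure Ω) [IsFiniteMeasure μ] {S S' : Type*} [Fintype S]
    [DecidableEq S'] (X : Ω → S) (hX : ∀ s, MeasurableSet {ω | X ω = s}) (g : S → S') (s' : S') :
    pr μ (fun ω => g (X ω)) s' = ∑ s ∈ Finset.univ.filter (fun s => g s = s'), pr μ X s := by
  classical
  have hU : {ω | g (X ω) = s'} = ⋃ s ∈ Finset.univ.filter (fun s => g s = s'), {ω | X ω = s} := by
    ext ω; simp
  have hd : (↑(Finset.univ.filter (fun s => g s = s')) : Set S).PairwiseDisjoint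
      (fun s => {ω | X ω = s}) := by
    intro a _ b _ hab
    simp only [Function.onFun, Set.disjoint_left, Set.mem_setOf_eq]
    rintro ω rfl h
    exact hab h
  unfold pr
  rw [hU, MeasureTheory.measure_biUnion_finset hd (fun s _ => hX s)]
  exact ENNReal.toReal_sum (fun a _ => measure_ne_top μ _)

lemma aux_sum_comp {Ω : Type*} [MeasurableSpace Ω] (μ : Measure Ω) [IsFiniteMeasure μ] {S S' : Type*} [Fintype S]
    [Fintype S'] [DecidableEq S'] (X : Ω → S) (hX : ∀ s, MeasurableSet {ω | X ω = s})
    (g : S → S') (F : S' → ℝ) :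
    ∑ s' : S', pr μ (fun ω => g (X ω)) s' * F s' = ∑ s : S, pr μ X s * F (g s) := by
  calc ∑ s' : S', pr μ (fun ω => g (X ω)) s' * F s'
      = ∑ s' : S', ∑ s ∈ Finset.univ.filter (fun s => g s = s'), pr μ X s * F s' := by
        refine Finset.sum_congr rfl fun s' _ => ?_
        rw [aux_pr_comp μ X hX g s', Finset.sum_mul]
    _ = ∑ s' : S', ∑ s ∈ Finset.univ.filter (fun s => g s = s'), pr μ X s * F (g s) := by
        refine Finset.sum_congr rfl fun s' _ => Finset.sum_congr rfl fun s hs => ?_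
        rw [(Finset.mem_filter.mp hs).2]
    _ = ∑ s : S, pr μ X s * F (g s) := Finset.sum_fiberwise _ _ _

lemma aux_pr_le_comp {Ω : Type*} [MeasurableSpace Ω] (μ : Measure Ω) [IsFiniteMeasure μ] {S S' : Type*} [Fintype S]
    [DecidableEq S'] (X : Ω → S) (hX : ∀ s, MeasurableSet {ω | X ω = s}) (g : S → S') (s : S) :
    pr μ X s ≤ pr μ (fun ω => g (X ω)) (g s) := by
  rw [aux_pr_comp μ X hX g]
  exact Finset.single_le_sum (fun i _ => aux_pr_nonneg μ X i) (by simp)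

lemma aux_gibbs {A : Type*} [Fintype A] (p q : A → ℝ) (hp : ∀ a, 0 ≤ p a) (hq : ∀ a, 0 ≤ q a)
    (hsupp : ∀ a, p a ≠ 0 → q a ≠ 0) (hsum : ∑ a, q a ≤ ∑ a, p a) :
    ∑ a, p a * Real.log (q a) ≤ ∑ a, p a * Real.log (p a) := by
  have key : ∀ a, p a * Real.log (q a) - p a * Real.log (p a) ≤ q a - p a := by
    intro a
    rcases eq_or_lt_of_le (hp a) with h | h
    · rw [← h]; simp [hq a]
    · have hqa : 0 < q a := lt_of_le_of_ne (hq a) (Ne.symm (hsupp a (ne_of_gt h)))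
      have h1 := Real.log_le_sub_one_of_pos (div_pos hqa h)
      rw [Real.log_div (ne_of_gt hqa) (ne_of_gt h)] at h1
      have h2 := mul_le_mul_of_nonneg_left h1 (le_of_lt h)
      calc p a * Real.log (q a) - p a * Real.log (p a)
          = p a * (Real.log (q a) - Real.log (p a)) := by ring
        _ ≤ p a * (q a / p a - 1) := h2
        _ = q a - p a := by field_simp
  have h3 := Finset.sum_le_sum (fun a (_ : a ∈ Finset.univ) => key a)
  rw [Finset.sum_sub_distrib, Finset.sum_sub_distrib] at h3
  linarith

lemma aux_mutInfo_nonneg {Ω : Type*} [MeasurableSpace Ω] (μ : Measure Ω) [IsProbabilityMeasure μ]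
    {S T : Type*} [Fintype S] [Fintype T] (X : Ω → S) (Y : Ω → T)
    (hX : ∀ s, MeasurableSet {ω | X ω = s}) (hY : ∀ t, MeasurableSet {ω | Y ω = t}) :
    0 ≤ mutInfo μ X Y := by
  classical
  set W : Ω → S × T := fun ω => (X ω, Y ω) with hW
  have hWfib : ∀ z : S × T, MeasurableSet {ω | W ω = z} := by
    intro z
    have h : {ω | W ω = z} = {ω | X ω = z.1} ∩ {ω | Y ω = z.2} := by
      ext ω; simp [hW, Prod.ext_iff]
    rw [h]; exact (hX z.1).inter (hY z.2)
  have hsuppX : ∀ z : S × T, pr μ W z ≤ pr μ X z.1 := fun z =>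
    aux_pr_le_comp μ W hWfib Prod.fst z
  have hsuppY : ∀ z : S × T, pr μ W z ≤ pr μ Y z.2 := fun z =>
    aux_pr_le_comp μ W hWfib Prod.snd z
  have hqsum : ∑ z : S × T, pr μ X z.1 * pr μ Y z.2 = 1 := by
    rw [Fintype.sum_prod_type, ← Finset.sum_mul_sum, aux_sum_pr μ X hX, aux_sum_pr μ Y hY]
    norm_num
  have key := aux_gibbs (pr μ W) (fun z => pr μ X z.1 * pr μ Y z.2) (aux_pr_nonneg μ W)
    (fun z => mul_nonneg (aux_pr_nonneg μ X _) (aux_pr_nonneg μ Y _))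
    (fun z hz => mul_ne_zero
      (fun h0 => hz (le_antisymm (h0 ▸ hsuppX z) (aux_pr_nonneg μ W z)))
      (fun h0 => hz (le_antisymm (h0 ▸ hsuppY z) (aux_pr_nonneg μ W z))))
    (by rw [hqsum, aux_sum_pr μ W hWfib])
  have hlog : ∑ z : S × T, pr μ W z * Real.log (pr μ X z.1 * pr μ Y z.2)
      = ∑ z : S × T, pr μ W z * (Real.log (pr μ X z.1) + Real.log (pr μ Y z.2)) := by
    refine Finset.sum_congr rfl fun z _ => ?_
    by_cases hz : pr μ W z = 0
    · rw [hz]; ring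
    · rw [Real.log_mul
        (fun h0 => hz (le_antisymm (h0 ▸ hsuppX z) (aux_pr_nonneg μ W z)))
        (fun h0 => hz (le_antisymm (h0 ▸ hsuppY z) (aux_pr_nonneg μ W z)))]
  have hX' : ∑ z : S × T, pr μ W z * Real.log (pr μ X z.1)
      = ∑ s : S, pr μ X s * Real.log (pr μ X s) :=
    (aux_sum_comp μ W hWfib Prod.fst (fun s => Real.log (pr μ X s))).symm
  have hY' : ∑ z : S × T, pr μ W z * Real.log (pr μ Y z.2)
      = ∑ t : T, pr μ Y t * Real.log (pr μ Y t) :=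
    (aux_sum_comp μ W hWfib Prod.snd (fun t => Real.log (pr μ Y t))).symm
  have hsplit : ∑ z : S × T, pr μ W z * (Real.log (pr μ X z.1) + Real.log (pr μ Y z.2))
      = ∑ z : S × T, pr μ W z * Real.log (pr μ X z.1)
        + ∑ z : S × T, pr μ W z * Real.log (pr μ Y z.2) := by
    rw [← Finset.sum_add_distrib]
    exact Finset.sum_congr rfl fun z _ => by ring
  rw [hlog, hsplit, hX', hY'] at key
  unfold mutInfo finEntropy
  have : (fun ω => (X ω, Y ω)) = W := rfl
  rw [this]
  linarith

lemma aux_indep_entropy {Ω : Type*} [MeasurableSpace Ω] (μ : Measure Ω) [IsProbabilityMeasure μ]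
    {m : ℕ} {S : Fin m → Type*} [∀ i, Fintype (S i)]
    (M : ∀ i, Ω → S i) (hsum : ∀ i, ∑ a, pr μ (M i) a = 1)
    (hindep : ∀ f : ∀ i, S i, pr μ (fun ω i => M i ω) f = ∏ i, pr μ (M i) (f i)) :
    ∑ f : ∀ i, S i, pr μ (fun ω i => M i ω) f * Real.log (pr μ (fun ω i => M i ω) f)
      = ∑ i, ∑ a, pr μ (M i) a * Real.log (pr μ (M i) a) := by
  classical
  classical
  have main : ∑ f : ∀ i, S i, pr μ (fun ω i => M i ω) f * Real.log (pr μ (fun ω i => M i ω) f)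
      = ∑ i, ∑ a, pr μ (M i) a * Real.log (pr μ (M i) a) := by
    have step1 : ∀ f : ∀ i, S i,
        pr μ (fun ω i => M i ω) f * Real.log (pr μ (fun ω i => M i ω) f)
        = ∑ j, ∏ i, (fun i a => if h : i = j then
            pr μ (M i) a * Real.log (pr μ (M i) a) else pr μ (M i) a) i (f i) := by
      intro f
      rw [hindep f]
      by_cases hnz : ∀ i, pr μ (M i) (f i) ≠ 0
      · rw [Real.log_prod (fun i _ => hnz i), Finset.mul_sum]
        refine Finset.sum_congr rfl fun j _ => ?_
        have herase : (∏ i ∈ Finset.univ.erase j, (fun i a => if h : i = j then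
              pr μ (M i) a * Real.log (pr μ (M i) a) else pr μ (M i) a) i (f i))
            = ∏ i ∈ Finset.univ.erase j, pr μ (M i) (f i) :=
          Finset.prod_congr rfl (fun i hi => dif_neg (Finset.ne_of_mem_erase hi))
        rw [← Finset.mul_prod_erase Finset.univ _ (Finset.mem_univ j),
            ← Finset.mul_prod_erase Finset.univ
              (fun i => (fun i a => if h : i = j then
                pr μ (M i) a * Real.log (pr μ (M i) a) else pr μ (M i) a) i (f i))
              (Finset.mem_univ j), herase]
        simp only [dif_pos rfl, dite_true]
        ring
      · push_neg at hnz
        obtain ⟨i0, hi0⟩ := hnz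
        rw [Finset.prod_eq_zero (Finset.mem_univ i0) hi0, zero_mul]
        symm
        refine Finset.sum_eq_zero fun j _ => ?_
        refine Finset.prod_eq_zero (Finset.mem_univ i0) ?_
        by_cases h : i0 = j
        · subst h; simp [hi0]
        · simp [h, hi0]
    rw [Finset.sum_congr rfl fun f _ => step1 f, Finset.sum_comm]
    refine Finset.sum_congr rfl fun j _ => ?_
    have hps := Finset.prod_univ_sum (fun i => (Finset.univ : Finset (S i)))
      (fun i a => if h : i = j then pr μ (M i) a * Real.log (pr μ (M i) a) else pr μ (M i) a)
    rw [show (Finset.univ : Finset (∀ i, S i)) = Fintype.piFinset (fun _ => Finset.univ) from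
      (Fintype.piFinset_univ).symm, ← hps]
    rw [Finset.prod_eq_single j (fun i _ hij => by
        have : (∑ a : S i, (fun i a => if h : i = j then
            pr μ (M i) a * Real.log (pr μ (M i) a) else pr μ (M i) a) i a)
            = ∑ a : S i, pr μ (M i) a :=
          Finset.sum_congr rfl (fun a _ => dif_neg hij)
        rw [this]; exact hsum i)
      (fun h => absurd (Finset.mem_univ j) h)]
    simp
  exact main

/-- Nonnegativity of source-side synergy.
For mutually independent finite-valued sources `M₁,…,M_m` and a finite-valued target `Y`,
the synergy `Syn := I((M₁,…,M_m);Y) − Σᵢ I(Mᵢ;Y)` satisfies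
`0 ≤ Syn ≤ I((M₁,…,M_m);Y)`. -/
theorem synergy_nonneg_and_le_joint_mutInfo
    {Ω : Type*} [MeasurableSpace Ω] (μ : Measure Ω) [IsProbabilityMeasure μ]
    (m : ℕ) (S : Fin m → Type*) [∀ i, Fintype (S i)]
    [∀ i, MeasurableSpace (S i)] [∀ i, MeasurableSingletonClass (S i)]
    {T : Type*} [Fintype T] [MeasurableSpace T] [MeasurableSingletonClass T]
    (M : ∀ i, Ω → S i) (Y : Ω → T)
    (hM : ∀ i, Measurable (M i)) (hY : Measurable Y)
    (hindep : ∀ f : ∀ i, S i,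
      pr μ (fun ω i => M i ω) f = ∏ i, pr μ (M i) (f i)) :
    0 ≤ mutInfo μ (fun ω i => M i ω) Y - ∑ i, mutInfo μ (M i) Y ∧
      mutInfo μ (fun ω i => M i ω) Y - ∑ i, mutInfo μ (M i) Y
        ≤ mutInfo μ (fun ω i => M i ω) Y := by
  classical
  have hMfib : ∀ i (a : S i), MeasurableSet {ω | M i ω = a} :=
    fun i a => hM i (measurableSet_singleton a)
  have hYfib : ∀ t, MeasurableSet {ω | Y ω = t} := fun t => hY (measurableSet_singleton t)
  set Z : Ω → (∀ i, S i) × T := fun ω => (fun i => M i ω, Y ω) with hZdef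
  have hZfib : ∀ z, MeasurableSet {ω | Z ω = z} := by
    intro z
    have h : {ω | Z ω = z} = (⋂ i, {ω | M i ω = z.1 i}) ∩ {ω | Y ω = z.2} := by
      ext ω
      simp only [hZdef, Set.mem_setOf_eq, Prod.ext_iff, Set.mem_inter_iff, Set.mem_iInter,
        funext_iff]
    rw [h]
    exact (MeasurableSet.iInter (fun i => hMfib i _)).inter (hYfib _)
  have hPairfib : ∀ i (w : S i × T), MeasurableSet {ω | (M i ω, Y ω) = w} := by
    intro i w
    have h : {ω | (M i ω, Y ω) = w} = {ω | M i ω = w.1} ∩ {ω | Y ω = w.2} := by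
      ext ω; simp [Prod.ext_iff]
    rw [h]; exact (hMfib i _).inter (hYfib _)
  have hZleY : ∀ z, pr μ Z z ≤ pr μ Y z.2 := fun z => aux_pr_le_comp μ Z hZfib Prod.snd z
  have hZlePair : ∀ i z, pr μ Z z ≤ pr μ (fun ω => (M i ω, Y ω)) (z.1 i, z.2) := fun i z =>
    aux_pr_le_comp μ Z hZfib (fun w => (w.1 i, w.2)) z
  have hzpos : ∀ z, pr μ Z z ≠ 0 → 0 < pr μ Z z :=
    fun z hz => lt_of_le_of_ne (aux_pr_nonneg μ Z z) (Ne.symm hz)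
  have hmarg : ∀ i (y : T), ∑ a, pr μ (fun ω => (M i ω, Y ω)) (a, y) = pr μ Y y := by
    intro i y
    have h1 : pr μ Y y = ∑ w ∈ Finset.univ.filter (fun w : S i × T => w.2 = y),
        pr μ (fun ω => (M i ω, Y ω)) w :=
      aux_pr_comp μ (fun ω => (M i ω, Y ω)) (hPairfib i) Prod.snd y
    rw [h1, Finset.sum_filter, Fintype.sum_prod_type]
    simp
  set q : (∀ i, S i) × T → ℝ := fun z => if pr μ Y z.2 = 0 then 0 else
    pr μ Y z.2 * ∏ i, (pr μ (fun ω => (M i ω, Y ω)) (z.1 i, z.2) / pr μ Y z.2) with hqdef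
  have hq0 : ∀ z, 0 ≤ q z := by
    intro z; rw [hqdef]; dsimp only
    split
    · exact le_refl 0
    · exact mul_nonneg (aux_pr_nonneg μ Y _) (Finset.prod_nonneg fun i _ =>
        div_nonneg (aux_pr_nonneg μ _ _) (aux_pr_nonneg μ Y _))
  have hsupp : ∀ z, pr μ Z z ≠ 0 → q z ≠ 0 := by
    intro z hz
    have hYpos : 0 < pr μ Y z.2 := lt_of_lt_of_le (hzpos z hz) (hZleY z)
    rw [hqdef]; dsimp only
    rw [if_neg (ne_of_gt hYpos)]
    exact ne_of_gt (mul_pos hYpos (Finset.prod_pos fun i _ =>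
      div_pos (lt_of_lt_of_le (hzpos z hz) (hZlePair i z)) hYpos))
  have hsumq : ∑ z, q z ≤ ∑ z, pr μ Z z := by
    rw [aux_sum_pr μ Z hZfib]
    calc ∑ z : (∀ i, S i) × T, q z = ∑ y : T, ∑ f : ∀ i, S i, q (f, y) := by
          rw [Fintype.sum_prod_type, Finset.sum_comm]
      _ ≤ ∑ y : T, pr μ Y y := by
          refine Finset.sum_le_sum fun y _ => ?_
          by_cases hy : pr μ Y y = 0
          · have hz : ∀ f : ∀ i, S i, q (f, y) = 0 := by
              intro f; rw [hqdef]; dsimp only; rw [if_pos hy]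
            rw [Finset.sum_congr rfl (fun f _ => hz f), Finset.sum_const]
            simp [hy]
          · have hq' : ∑ f : ∀ i, S i, q (f, y)
                = pr μ Y y * ∑ f : ∀ i, S i,
                    ∏ i, (pr μ (fun ω => (M i ω, Y ω)) (f i, y) / pr μ Y y) := by
              rw [Finset.mul_sum]
              exact Finset.sum_congr rfl fun f _ => by
                rw [hqdef]; dsimp only; rw [if_neg hy]
            rw [hq']
            have hps := Finset.prod_univ_sum (fun i => (Finset.univ : Finset (S i)))
              (fun i a => pr μ (fun ω => (M i ω, Y ω)) (a, y) / pr μ Y y)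
            rw [show (Finset.univ : Finset (∀ i, S i))
                = Fintype.piFinset (fun _ => Finset.univ) from (Fintype.piFinset_univ).symm,
              ← hps]
            have h1 : ∀ i : Fin m,
                ∑ a : S i, pr μ (fun ω => (M i ω, Y ω)) (a, y) / pr μ Y y = 1 := by
              intro i; rw [← Finset.sum_div, hmarg i y, div_self hy]
            rw [Finset.prod_congr rfl (fun i _ => h1 i), Finset.prod_const_one, mul_one]
      _ = 1 := aux_sum_pr μ Y hYfib
  have key := aux_gibbs (pr μ Z) q (aux_pr_nonneg μ Z) hq0 hsupp hsumq
  have hlogq : ∀ z, pr μ Z z * Real.log (q z)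
      = pr μ Z z * ((∑ i, Real.log (pr μ (fun ω => (M i ω, Y ω)) (z.1 i, z.2)))
          + (1 - (m : ℝ)) * Real.log (pr μ Y z.2)) := by
    intro z
    by_cases hz : pr μ Z z = 0
    · rw [hz]; ring
    · have hYpos : 0 < pr μ Y z.2 := lt_of_lt_of_le (hzpos z hz) (hZleY z)
      have hPpos : ∀ i, 0 < pr μ (fun ω => (M i ω, Y ω)) (z.1 i, z.2) :=
        fun i => lt_of_lt_of_le (hzpos z hz) (hZlePair i z)
      rw [hqdef]; dsimp only
      rw [if_neg (ne_of_gt hYpos),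
        Real.log_mul (ne_of_gt hYpos) (ne_of_gt (Finset.prod_pos fun i _ =>
          div_pos (hPpos i) hYpos)),
        Real.log_prod (fun i _ => ne_of_gt (div_pos (hPpos i) hYpos)),
        Finset.sum_congr rfl (fun i (_ : i ∈ Finset.univ) =>
          Real.log_div (ne_of_gt (hPpos i)) (ne_of_gt hYpos)),
        Finset.sum_sub_distrib, Finset.sum_const, Finset.card_univ, Fintype.card_fin,
        nsmul_eq_mul]
      ring
  rw [Finset.sum_congr rfl (fun z _ => hlogq z)] at key
  have e1 : ∀ i : Fin m, ∑ z : (∀ i, S i) × T,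
        pr μ Z z * Real.log (pr μ (fun ω => (M i ω, Y ω)) (z.1 i, z.2))
      = ∑ w : S i × T, pr μ (fun ω => (M i ω, Y ω)) w
          * Real.log (pr μ (fun ω => (M i ω, Y ω)) w) :=
    fun i => (aux_sum_comp μ Z hZfib (fun w => (w.1 i, w.2))
      (fun w => Real.log (pr μ (fun ω => (M i ω, Y ω)) w))).symm
  have e2 : ∑ z : (∀ i, S i) × T, pr μ Z z * Real.log (pr μ Y z.2)
      = ∑ y : T, pr μ Y y * Real.log (pr μ Y y) :=
    (aux_sum_comp μ Z hZfib Prod.snd (fun y => Real.log (pr μ Y y))).symm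
  have split1 : ∑ z : (∀ i, S i) × T,
        pr μ Z z * ((∑ i, Real.log (pr μ (fun ω => (M i ω, Y ω)) (z.1 i, z.2)))
          + (1 - (m : ℝ)) * Real.log (pr μ Y z.2))
      = (∑ i, ∑ w : S i × T, pr μ (fun ω => (M i ω, Y ω)) w
            * Real.log (pr μ (fun ω => (M i ω, Y ω)) w))
        + (1 - (m : ℝ)) * ∑ y : T, pr μ Y y * Real.log (pr μ Y y) := by
    calc ∑ z : (∀ i, S i) × T,
          pr μ Z z * ((∑ i, Real.log (pr μ (fun ω => (M i ω, Y ω)) (z.1 i, z.2)))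
            + (1 - (m : ℝ)) * Real.log (pr μ Y z.2))
        = ∑ z : (∀ i, S i) × T,
            ((∑ i, pr μ Z z * Real.log (pr μ (fun ω => (M i ω, Y ω)) (z.1 i, z.2)))
              + (1 - (m : ℝ)) * (pr μ Z z * Real.log (pr μ Y z.2))) := by
          refine Finset.sum_congr rfl fun z _ => ?_
          rw [mul_add, Finset.mul_sum]; ring
      _ = (∑ z : (∀ i, S i) × T,
            ∑ i, pr μ Z z * Real.log (pr μ (fun ω => (M i ω, Y ω)) (z.1 i, z.2)))
          + (1 - (m : ℝ)) * ∑ z : (∀ i, S i) × T, pr μ Z z * Real.log (pr μ Y z.2) := by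
          rw [Finset.sum_add_distrib, ← Finset.mul_sum]
      _ = (∑ i, ∑ z : (∀ i, S i) × T,
            pr μ Z z * Real.log (pr μ (fun ω => (M i ω, Y ω)) (z.1 i, z.2)))
          + (1 - (m : ℝ)) * ∑ z : (∀ i, S i) × T, pr μ Z z * Real.log (pr μ Y z.2) := by
          rw [Finset.sum_comm]
      _ = _ := by rw [Finset.sum_congr rfl (fun i _ => e1 i), e2]
  rw [split1] at key
  have hHM' := aux_indep_entropy μ M (fun i => aux_sum_pr μ (M i) (hMfib i)) hindep
  have h1 : mutInfo μ (fun ω i => M i ω) Y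
      = (-∑ f : ∀ i, S i, pr μ (fun ω i => M i ω) f
            * Real.log (pr μ (fun ω i => M i ω) f))
        + (-∑ y : T, pr μ Y y * Real.log (pr μ Y y))
        - (-∑ z : (∀ i, S i) × T, pr μ Z z * Real.log (pr μ Z z)) := rfl
  have h2 : ∀ i, mutInfo μ (M i) Y
      = (-∑ a : S i, pr μ (M i) a * Real.log (pr μ (M i) a))
        + (-∑ y : T, pr μ Y y * Real.log (pr μ Y y))
        - (-∑ w : S i × T, pr μ (fun ω => (M i ω, Y ω)) w
            * Real.log (pr μ (fun ω => (M i ω, Y ω)) w)) := fun i => rfl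
  have hIs : 0 ≤ ∑ i, mutInfo μ (M i) Y :=
    Finset.sum_nonneg fun i _ => aux_mutInfo_nonneg μ (M i) Y (hMfib i) hYfib
  have main : 0 ≤ mutInfo μ (fun ω i => M i ω) Y - ∑ i, mutInfo μ (M i) Y := by
    rw [h1, Finset.sum_congr rfl (fun i _ => h2 i), hHM']
    simp only [Finset.sum_add_distrib, Finset.sum_sub_distrib, Finset.sum_neg_distrib,
      Finset.sum_const, Finset.card_univ, Fintype.card_fin, nsmul_eq_mul]
    nlinarith [key]
  exact ⟨main, by linarith⟩
end

section
/- Maximality of the finest partition. Let A be a finite index set, let (X_a)_{a∈A} be finite-valued random variables that are mutually independent, and let Y be a finite-valued random variable on the same probability space. Then for every partition P = {M₁,…,M_m} of A, Syn_P(X_A → Y) ≤ Syn_{P_fine}(X_A → Y), where P_fine = {{a} : a ∈ A} is the partition into singletons; equivalently, Σ_{j=1}^m I(X_{M_j}; Y) ≥ Σ_{a∈A} I(X_a; Y). -/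
open MeasureTheory Finset

/-- `P` is a partition of the finite index set `A`: its blocks are nonempty subsets of `A`,
pairwise disjoint, and they cover `A`. -/
def IsFinsetPartition {ι : Type*} (A : Finset ι) (P : Finset (Finset ι)) : Prop :=
  (∀ B ∈ P, B.Nonempty) ∧ (∀ B ∈ P, B ⊆ A) ∧
    (∀ B ∈ P, ∀ C ∈ P, B ≠ C → Disjoint B C) ∧ (∀ a ∈ A, ∃ B ∈ P, a ∈ B)

/-- The tuple `X_B = (X_a)_{a ∈ B}` of a family of random variables over a finite index
subset `B`, viewed as a single random variable valued in the product type. -/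
def tupleOn {Ω : Type*} {ι : Type*} {S : ι → Type*} (X : ∀ a, Ω → S a) (B : Finset ι) :
    Ω → ∀ a : B, S a :=
  fun ω a => X a ω

/-- The synergy of `X_A` with respect to `Y` relative to a partition `Q = {N₁,…,N_r}` of `A`:
`Syn_Q(X_A → Y) := I(X_A;Y) − Σ_j I(X_{N_j};Y)`. -/
noncomputable def synPart {Ω : Type*} [MeasurableSpace Ω] (μ : Measure Ω)
    {ι : Type*} [DecidableEq ι] {S : ι → Type*} [∀ a, Fintype (S a)]
    {T : Type*} [Fintype T]
    (X : ∀ a, Ω → S a) (A : Finset ι) (Q : Finset (Finset ι)) (Y : Ω → T) : ℝ :=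
  mutInfo μ (tupleOn X A) Y - ∑ B ∈ Q, mutInfo μ (tupleOn X B) Y

namespace SynAux

variable {Ω : Type*} [MeasurableSpace Ω] {μ : Measure Ω}

lemma pr_nonneg {S : Type*} (X : Ω → S) (s : S) : 0 ≤ pr μ X s :=
  ENNReal.toReal_nonneg

lemma pr_congr {S T : Type*} {X : Ω → S} {Z : Ω → T} {s : S} {t : T}
    (h : ∀ ω, X ω = s ↔ Z ω = t) : pr μ X s = pr μ Z t := by
  unfold pr
  have hset : {ω | X ω = s} = {ω | Z ω = t} := Set.ext h
  rw [hset]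

lemma pr_mono [IsProbabilityMeasure μ] {S T : Type*} {X : Ω → S} {Z : Ω → T} {s : S} {t : T}
    (h : ∀ ω, X ω = s → Z ω = t) : pr μ X s ≤ pr μ Z t :=
  ENNReal.toReal_mono (measure_ne_top _ _) (measure_mono fun ω hω => h ω hω)

lemma mfib_pair {S T : Type*} {U : Ω → S} {V : Ω → T}
    (hU : ∀ s, MeasurableSet {ω | U ω = s}) (hV : ∀ t, MeasurableSet {ω | V ω = t}) :
    ∀ x : S × T, MeasurableSet {ω | (U ω, V ω) = x} := by
  rintro ⟨s, t⟩
  have : {ω | (U ω, V ω) = (s, t)} = {ω | U ω = s} ∩ {ω | V ω = t} := by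
    ext ω; simp [Prod.ext_iff]
  rw [this]
  exact (hU s).inter (hV t)

lemma sum_pr [IsProbabilityMeasure μ] {S : Type*} [Fintype S] {X : Ω → S}
    (hX : ∀ s, MeasurableSet {ω | X ω = s}) : ∑ s, pr μ X s = 1 := by
  classical
  have hdisj : (↑(Finset.univ : Finset S) : Set S).PairwiseDisjoint
      (fun s => {ω | X ω = s}) := by
    intro i _ j _ hij
    exact Set.disjoint_left.mpr fun ω h1 h2 => hij (h1 ▸ h2 ▸ rfl)
  have hunion : (Set.univ : Set Ω) = ⋃ s ∈ (Finset.univ : Finset S), {ω | X ω = s} := by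
    ext ω; simp
  have h1 : (1 : ENNReal) = ∑ s, μ {ω | X ω = s} := by
    rw [← measure_univ (μ := μ), hunion, measure_biUnion_finset hdisj fun s _ => hX s]
  have := congrArg ENNReal.toReal h1
  rw [ENNReal.toReal_sum (fun s _ => measure_ne_top _ _)] at this
  simpa [pr] using this.symm

lemma pr_fst [IsProbabilityMeasure μ] {S T : Type*} [Fintype T] {U : Ω → S} {V : Ω → T} (u : S)
    (hU : ∀ s, MeasurableSet {ω | U ω = s}) (hV : ∀ t, MeasurableSet {ω | V ω = t}) :
    pr μ U u = ∑ t, pr μ (fun ω => (U ω, V ω)) (u, t) := by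
  classical
  have hdisj : (↑(Finset.univ : Finset T) : Set T).PairwiseDisjoint
      (fun t => {ω | (U ω, V ω) = (u, t)}) := by
    intro i _ j _ hij
    refine Set.disjoint_left.mpr fun ω h1 h2 => hij ?_
    simp only [Set.mem_setOf_eq, Prod.mk.injEq] at h1 h2
    rw [← h1.2, ← h2.2]
  have hunion : {ω | U ω = u} = ⋃ t ∈ (Finset.univ : Finset T), {ω | (U ω, V ω) = (u, t)} := by
    ext ω; simp [Prod.ext_iff]
  have h1 : μ {ω | U ω = u} = ∑ t, μ {ω | (U ω, V ω) = (u, t)} := by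
    rw [hunion, measure_biUnion_finset hdisj fun t _ => mfib_pair hU hV (u, t)]
  have := congrArg ENNReal.toReal h1
  rw [ENNReal.toReal_sum (fun t _ => measure_ne_top _ _)] at this
  simpa [pr] using this

lemma gibbs {α : Type*} [Fintype α] (p q : α → ℝ) (hp : ∀ i, 0 ≤ p i)
    (hq : ∀ i, 0 ≤ q i) (hpq : ∀ i, q i = 0 → p i = 0)
    (hp1 : ∑ i, p i = 1) (hq1 : ∑ i, q i ≤ 1) :
    ∑ i, p i * Real.log (q i) ≤ ∑ i, p i * Real.log (p i) := by
  have key : ∀ i, p i * Real.log (q i) - p i * Real.log (p i) ≤ q i - p i := by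
    intro i
    rcases eq_or_lt_of_le (hp i) with h | h
    · rw [← h]; simpa using hq i
    · have hqi : 0 < q i := by
        rcases eq_or_lt_of_le (hq i) with h0 | h0
        · exact absurd (hpq i h0.symm) (by linarith)
        · exact h0
      have hlog : Real.log (q i) - Real.log (p i) = Real.log (q i / p i) :=
        (Real.log_div hqi.ne' h.ne').symm
      have hle : Real.log (q i / p i) ≤ q i / p i - 1 :=
        Real.log_le_sub_one_of_pos (div_pos hqi h)
      have := mul_le_mul_of_nonneg_left hle (le_of_lt h)
      calc p i * Real.log (q i) - p i * Real.log (p i)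
          = p i * (Real.log (q i) - Real.log (p i)) := by ring
        _ = p i * Real.log (q i / p i) := by rw [hlog]
        _ ≤ p i * (q i / p i - 1) := this
        _ = q i - p i := by field_simp
  have hsum : ∑ i, (p i * Real.log (q i) - p i * Real.log (p i)) ≤ ∑ i, (q i - p i) :=
    Finset.sum_le_sum fun i _ => key i
  rw [Finset.sum_sub_distrib, Finset.sum_sub_distrib, hp1] at hsum
  linarith

/-- Entropy is invariant under injective relabeling of values. -/
lemma finEntropy_comp {S S' : Type*} [Fintype S] [Fintype S'] {U : Ω → S}
    (f : S → S') (hf : Function.Injective f) :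
    finEntropy μ (fun ω => f (U ω)) = finEntropy μ U := by
  classical
  unfold finEntropy
  congr 1
  have h0 : ∀ s' ∈ (Finset.univ : Finset S'), s' ∉ Finset.univ.image f →
      pr μ (fun ω => f (U ω)) s' * Real.log (pr μ (fun ω => f (U ω)) s') = 0 := by
    intro s' _ hs'
    have : {ω | f (U ω) = s'} = ∅ := by
      ext ω
      simp only [Set.mem_setOf_eq, Set.mem_empty_iff_false, iff_false]
      intro h
      exact hs' (Finset.mem_image.mpr ⟨U ω, Finset.mem_univ _, h⟩)
    have hz : pr μ (fun ω => f (U ω)) s' = 0 := by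
      unfold pr; rw [this]; simp
    rw [hz]; simp
  rw [← Finset.sum_subset (Finset.subset_univ (Finset.univ.image f)) h0,
    Finset.sum_image (fun a _ b _ h => hf h)]
  refine Finset.sum_congr rfl fun s _ => ?_
  have : pr μ (fun ω => f (U ω)) (f s) = pr μ U s :=
    pr_congr fun ω => ⟨fun h => hf h, fun h => by rw [h]⟩
  rw [this]

lemma mutInfo_comp {S S' T : Type*} [Fintype S] [Fintype S'] [Fintype T] {U : Ω → S}
    (f : S → S') (hf : Function.Injective f) (Y : Ω → T) :
    mutInfo μ (fun ω => f (U ω)) Y = mutInfo μ U Y := by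
  unfold mutInfo
  rw [finEntropy_comp f hf]
  congr 1
  have : (fun ω => (f (U ω), Y ω)) = fun ω => (Prod.map f id) (U ω, Y ω) := rfl
  rw [this, finEntropy_comp (Prod.map f id) (hf.prodMap Function.injective_id)]

lemma mutInfo_unique [IsProbabilityMeasure μ] {D T : Type*} [Fintype D] [Unique D] [Fintype T]
    (C : Ω → D) (Y : Ω → T) : mutInfo μ C Y = 0 := by
  have hC : finEntropy μ C = 0 := by
    unfold finEntropy
    rw [Finset.univ_unique, Finset.sum_singleton]
    have : pr μ C default = 1 := by
      unfold pr
      have : {ω | C ω = default} = Set.univ := by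
        ext ω
        simp only [Set.mem_setOf_eq, Set.mem_univ, iff_true]
        exact Unique.eq_default _
      rw [this, measure_univ]; simp
    rw [this]; simp
  have hpair : finEntropy μ (fun ω => (C ω, Y ω)) = finEntropy μ Y := by
    have h1 : (fun ω => (C ω, Y ω)) = fun ω => ((default : D), Y ω) := by
      funext ω; rw [Unique.eq_default (C ω)]
    have h2 : Function.Injective (fun y : T => ((default : D), y)) := by
      intro y y' h
      simpa using h
    rw [h1]
    exact finEntropy_comp (fun y : T => ((default : D), y)) h2
  unfold mutInfo
  rw [hC, hpair]
  ring

lemma mul_log_mul {x y : ℝ} (hx : 0 ≤ x) (hy : 0 ≤ y) :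
    x * y * Real.log (x * y) = x * Real.log x * y + x * (y * Real.log y) := by
  rcases eq_or_lt_of_le hx with h | h
  · rw [← h]; ring_nf
  rcases eq_or_lt_of_le hy with h' | h'
  · rw [← h']; ring_nf
  rw [Real.log_mul h.ne' h'.ne']; ring

/-- Entropy of an independent pair is the sum of entropies. -/
lemma finEntropy_pair_indep [IsProbabilityMeasure μ] {S T : Type*} [Fintype S] [Fintype T]
    {U : Ω → S} {V : Ω → T}
    (hU : ∀ s, MeasurableSet {ω | U ω = s}) (hV : ∀ t, MeasurableSet {ω | V ω = t})
    (hind : ∀ s t, pr μ (fun ω => (U ω, V ω)) (s, t) = pr μ U s * pr μ V t) :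
    finEntropy μ (fun ω => (U ω, V ω)) = finEntropy μ U + finEntropy μ V := by
  unfold finEntropy
  rw [Fintype.sum_prod_type]
  have hpt : ∀ s t, pr μ (fun ω => (U ω, V ω)) (s, t) *
      Real.log (pr μ (fun ω => (U ω, V ω)) (s, t))
      = pr μ U s * Real.log (pr μ U s) * pr μ V t
        + pr μ U s * (pr μ V t * Real.log (pr μ V t)) := by
    intro s t
    rw [hind s t]
    exact mul_log_mul (pr_nonneg U s) (pr_nonneg V t)
  calc -∑ s, ∑ t, pr μ (fun ω => (U ω, V ω)) (s, t) *
        Real.log (pr μ (fun ω => (U ω, V ω)) (s, t))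
      = -∑ s, ∑ t, (pr μ U s * Real.log (pr μ U s) * pr μ V t
          + pr μ U s * (pr μ V t * Real.log (pr μ V t))) := by
        congr 1
        exact Finset.sum_congr rfl fun s _ => Finset.sum_congr rfl fun t _ => hpt s t
    _ = -((∑ s, pr μ U s * Real.log (pr μ U s)) * (∑ t, pr μ V t)
          + (∑ s, pr μ U s) * (∑ t, pr μ V t * Real.log (pr μ V t))) := by
        congr 1
        calc ∑ s, ∑ t, (pr μ U s * Real.log (pr μ U s) * pr μ V t
              + pr μ U s * (pr μ V t * Real.log (pr μ V t)))
            = ∑ s, (pr μ U s * Real.log (pr μ U s) * (∑ t, pr μ V t)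
              + pr μ U s * (∑ t, pr μ V t * Real.log (pr μ V t))) := by
              refine Finset.sum_congr rfl fun s _ => ?_
              rw [Finset.sum_add_distrib, ← Finset.mul_sum, ← Finset.mul_sum]
          _ = (∑ s, pr μ U s * Real.log (pr μ U s)) * (∑ t, pr μ V t)
              + (∑ s, pr μ U s) * (∑ t, pr μ V t * Real.log (pr μ V t)) := by
              rw [Finset.sum_add_distrib, ← Finset.sum_mul, ← Finset.sum_mul]
    _ = (-∑ s, pr μ U s * Real.log (pr μ U s)) + -∑ t, pr μ V t * Real.log (pr μ V t) := by
        rw [sum_pr hU, sum_pr hV]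
        ring

lemma entropy_submod_pmf {A B C : Type*} [Fintype A] [Fintype B] [Fintype C]
    (p : (A × B) × C → ℝ) (pUY : A × C → ℝ) (pVY : B × C → ℝ) (pY : C → ℝ)
    (hp : ∀ x, 0 ≤ p x) (hp1 : ∑ x, p x = 1)
    (hUY : ∀ z, pUY z = ∑ v, p ((z.1, v), z.2))
    (hVY : ∀ z, pVY z = ∑ u, p ((u, z.1), z.2))
    (hY : ∀ y, pY y = ∑ w : A × B, p (w, y)) :
    (-∑ x, p x * Real.log (p x)) + (-∑ y, pY y * Real.log (pY y))
      ≤ (-∑ z : A × C, pUY z * Real.log (pUY z))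
        + (-∑ z : B × C, pVY z * Real.log (pVY z)) := by
  classical
  have hUY0 : ∀ z, 0 ≤ pUY z := fun z => by
    rw [hUY]; exact Finset.sum_nonneg fun v _ => hp _
  have hVY0 : ∀ z, 0 ≤ pVY z := fun z => by
    rw [hVY]; exact Finset.sum_nonneg fun u _ => hp _
  have hY0 : ∀ y, 0 ≤ pY y := fun y => by
    rw [hY]; exact Finset.sum_nonneg fun w _ => hp _
  have hle1 : ∀ u v y, p ((u, v), y) ≤ pUY (u, y) := fun u v y => by
    rw [hUY]
    exact Finset.single_le_sum (f := fun v => p ((u, v), y)) (fun i _ => hp _) (mem_univ v)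
  have hle2 : ∀ u v y, p ((u, v), y) ≤ pVY (v, y) := fun u v y => by
    rw [hVY]
    exact Finset.single_le_sum (f := fun u => p ((u, v), y)) (fun i _ => hp _) (mem_univ u)
  have hle3 : ∀ u v y, p ((u, v), y) ≤ pY y := fun u v y => by
    rw [hY]
    exact Finset.single_le_sum (f := fun w : A × B => p (w, y)) (fun i _ => hp _)
      (mem_univ (u, v))
  have marg1 : ∀ y, ∑ u, pUY (u, y) = pY y := fun y => by
    rw [hY, Fintype.sum_prod_type]
    exact Finset.sum_congr rfl fun u _ => (hUY (u, y))
  have marg2 : ∀ y, ∑ v, pVY (v, y) = pY y := fun y => by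
    rw [hY, Fintype.sum_prod_type]
    rw [Finset.sum_comm]
    exact Finset.sum_congr rfl fun v _ => (hVY (v, y))
  set q : (A × B) × C → ℝ :=
    fun x => pUY (x.1.1, x.2) * pVY (x.1.2, x.2) / pY x.2 with hq_def
  have hq0 : ∀ x, 0 ≤ q x := fun x =>
    div_nonneg (mul_nonneg (hUY0 _) (hVY0 _)) (hY0 _)
  have hpq : ∀ x, q x = 0 → p x = 0 := by
    rintro ⟨⟨u, v⟩, y⟩ h0
    rcases div_eq_zero_iff.mp h0 with h | h
    · rcases mul_eq_zero.mp h with h | h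
      · exact le_antisymm (h ▸ hle1 u v y) (hp _)
      · exact le_antisymm (h ▸ hle2 u v y) (hp _)
    · exact le_antisymm (h ▸ hle3 u v y) (hp _)
  have hq1 : ∑ x, q x ≤ 1 := by
    have hstep : ∑ x, q x = ∑ y, (∑ u, pUY (u, y)) * (∑ v, pVY (v, y)) / pY y := by
      rw [Fintype.sum_prod_type, Finset.sum_comm]
      refine Finset.sum_congr rfl fun y _ => ?_
      rw [Fintype.sum_prod_type]
      rw [Finset.sum_mul, Finset.sum_div]
      refine Finset.sum_congr rfl fun u _ => ?_
      rw [Finset.mul_sum, Finset.sum_div]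
    rw [hstep]
    have hbound : ∀ y, (∑ u, pUY (u, y)) * (∑ v, pVY (v, y)) / pY y ≤ pY y := by
      intro y
      rw [marg1, marg2]
      rcases eq_or_lt_of_le (hY0 y) with h | h
      · rw [← h]; simp
      · rw [mul_div_assoc, div_self h.ne', mul_one]
    calc ∑ y, (∑ u, pUY (u, y)) * (∑ v, pVY (v, y)) / pY y
        ≤ ∑ y, pY y := Finset.sum_le_sum fun y _ => hbound y
      _ = 1 := by
          rw [← hp1, Fintype.sum_prod_type, Finset.sum_comm]
          exact Finset.sum_congr rfl fun y _ => hY y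
  have key := gibbs p q hp hq0 hpq hp1 hq1
  have hpt : ∀ x, p x * Real.log (q x)
      = p x * Real.log (pUY (x.1.1, x.2)) + p x * Real.log (pVY (x.1.2, x.2))
        - p x * Real.log (pY x.2) := by
    rintro ⟨⟨u, v⟩, y⟩
    rcases eq_or_lt_of_le (hp ((u, v), y)) with h | h
    · rw [← h]; ring
    · have h1 : 0 < pUY (u, y) := lt_of_lt_of_le h (hle1 u v y)
      have h2 : 0 < pVY (v, y) := lt_of_lt_of_le h (hle2 u v y)
      have h3 : 0 < pY y := lt_of_lt_of_le h (hle3 u v y)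
      have : q ((u, v), y) = pUY (u, y) * pVY (v, y) / pY y := rfl
      rw [this, Real.log_div (mul_pos h1 h2).ne' h3.ne', Real.log_mul h1.ne' h2.ne']
      ring
  have S1 : ∑ x : (A × B) × C, p x * Real.log (pUY (x.1.1, x.2))
      = ∑ z : A × C, pUY z * Real.log (pUY z) := by
    rw [Fintype.sum_prod_type, Fintype.sum_prod_type]
    rw [show (∑ z : A × C, pUY z * Real.log (pUY z))
        = ∑ u, ∑ y, pUY (u, y) * Real.log (pUY (u, y)) from Fintype.sum_prod_type _]
    refine Finset.sum_congr rfl fun u _ => ?_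
    rw [Finset.sum_comm]
    refine Finset.sum_congr rfl fun y _ => ?_
    dsimp only
    rw [← Finset.sum_mul, ← hUY (u, y)]
  have S2 : ∑ x : (A × B) × C, p x * Real.log (pVY (x.1.2, x.2))
      = ∑ z : B × C, pVY z * Real.log (pVY z) := by
    rw [Fintype.sum_prod_type, Fintype.sum_prod_type, Finset.sum_comm]
    rw [show (∑ z : B × C, pVY z * Real.log (pVY z))
        = ∑ v, ∑ y, pVY (v, y) * Real.log (pVY (v, y)) from Fintype.sum_prod_type _]
    refine Finset.sum_congr rfl fun v _ => ?_
    rw [Finset.sum_comm]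
    refine Finset.sum_congr rfl fun y _ => ?_
    dsimp only
    rw [← Finset.sum_mul, ← hVY (v, y)]
  have S3 : ∑ x : (A × B) × C, p x * Real.log (pY x.2)
      = ∑ y, pY y * Real.log (pY y) := by
    rw [Fintype.sum_prod_type, Finset.sum_comm]
    refine Finset.sum_congr rfl fun y _ => ?_
    dsimp only
    rw [← Finset.sum_mul, ← hY y]
  have hexp : ∑ x, p x * Real.log (q x)
      = (∑ z : A × C, pUY z * Real.log (pUY z))
        + (∑ z : B × C, pVY z * Real.log (pVY z)) - ∑ y, pY y * Real.log (pY y) := by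
    rw [show (∑ x, p x * Real.log (q x))
        = ∑ x : (A × B) × C, (p x * Real.log (pUY (x.1.1, x.2))
            + p x * Real.log (pVY (x.1.2, x.2)) - p x * Real.log (pY x.2)) from
      Finset.sum_congr rfl fun x _ => hpt x]
    rw [Finset.sum_sub_distrib, Finset.sum_add_distrib, S1, S2, S3]
  rw [hexp] at key
  linarith

/-- Submodularity: `H((U,V),Y) + H(Y) ≤ H(U,Y) + H(V,Y)`. -/
lemma entropy_submod [IsProbabilityMeasure μ] {A B C : Type*} [Fintype A] [Fintype B] [Fintype C]
    {U : Ω → A} {V : Ω → B} {Y : Ω → C}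
    (hU : ∀ s, MeasurableSet {ω | U ω = s}) (hV : ∀ s, MeasurableSet {ω | V ω = s})
    (hYf : ∀ s, MeasurableSet {ω | Y ω = s}) :
    finEntropy μ (fun ω => ((U ω, V ω), Y ω)) + finEntropy μ Y
      ≤ finEntropy μ (fun ω => (U ω, Y ω)) + finEntropy μ (fun ω => (V ω, Y ω)) := by
  have mUY : ∀ z : A × C, pr μ (fun ω => (U ω, Y ω)) z
      = ∑ v, pr μ (fun ω => ((U ω, V ω), Y ω)) ((z.1, v), z.2) := by
    rintro ⟨u, y⟩
    rw [pr_fst (u, y) (mfib_pair hU hYf) hV]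
    refine Finset.sum_congr rfl fun v _ => pr_congr fun ω => ?_
    simp only [Prod.mk.injEq]
    tauto
  have mVY : ∀ z : B × C, pr μ (fun ω => (V ω, Y ω)) z
      = ∑ u, pr μ (fun ω => ((U ω, V ω), Y ω)) ((u, z.1), z.2) := by
    rintro ⟨v, y⟩
    rw [pr_fst (v, y) (mfib_pair hV hYf) hU]
    refine Finset.sum_congr rfl fun u _ => pr_congr fun ω => ?_
    simp only [Prod.mk.injEq]
    tauto
  have mY : ∀ y, pr μ Y y = ∑ w : A × B, pr μ (fun ω => ((U ω, V ω), Y ω)) (w, y) := by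
    intro y
    rw [pr_fst y hYf (mfib_pair hU hV)]
    refine Finset.sum_congr rfl fun w _ => pr_congr fun ω => ?_
    rcases w with ⟨u, v⟩
    simp only [Prod.mk.injEq]
    tauto
  have h := entropy_submod_pmf (fun x => pr μ (fun ω => ((U ω, V ω), Y ω)) x)
      (fun z => pr μ (fun ω => (U ω, Y ω)) z) (fun z => pr μ (fun ω => (V ω, Y ω)) z)
      (fun y => pr μ Y y) (fun x => pr_nonneg _ _)
      (sum_pr (mfib_pair (mfib_pair hU hV) hYf)) mUY mVY mY
  exact h

/-- Superadditivity of mutual information for independent sources. -/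
lemma mutInfo_superadd [IsProbabilityMeasure μ] {A B C : Type*} [Fintype A] [Fintype B]
    [Fintype C] {U : Ω → A} {V : Ω → B} {Y : Ω → C}
    (hU : ∀ s, MeasurableSet {ω | U ω = s}) (hV : ∀ s, MeasurableSet {ω | V ω = s})
    (hYf : ∀ s, MeasurableSet {ω | Y ω = s})
    (hind : ∀ s t, pr μ (fun ω => (U ω, V ω)) (s, t) = pr μ U s * pr μ V t) :
    mutInfo μ U Y + mutInfo μ V Y ≤ mutInfo μ (fun ω => (U ω, V ω)) Y := by
  have hsub := entropy_submod (μ := μ) hU hV hYf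
  have hpair := finEntropy_pair_indep hU hV hind
  unfold mutInfo
  dsimp only
  linarith

section Combine

variable {ι : Type*} [DecidableEq ι] {S : ι → Type*}

/-- Combine a value at `a` with a tuple on `B` into a tuple on `insert a B`. -/
def combine (a : ι) (B : Finset ι) (s : S a) (g : ∀ b : B, S b) :
    ∀ b : (insert a B : Finset ι), S b :=
  fun b => if h : (b : ι) = a then cast (congrArg S h.symm) s
    else g ⟨b, by
      rcases Finset.mem_insert.mp b.2 with h' | h'
      · exact absurd h' h
      · exact h'⟩

lemma combine_self (a : ι) (B : Finset ι) (s : S a) (g : ∀ b : B, S b) :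
    combine a B s g ⟨a, Finset.mem_insert_self a B⟩ = s := by
  unfold combine
  rw [dif_pos rfl]
  exact cast_eq _ s

lemma combine_of_mem (a : ι) (B : Finset ι) (ha : a ∉ B) (s : S a) (g : ∀ b : B, S b)
    (b : ι) (hb : b ∈ B) :
    combine a B s g ⟨b, Finset.mem_insert_of_mem hb⟩ = g ⟨b, hb⟩ := by
  unfold combine
  have hne : ((⟨b, Finset.mem_insert_of_mem hb⟩ : {x // x ∈ insert a B}) : ι) ≠ a := by
    intro h
    exact ha (h ▸ hb)
  rw [dif_neg hne]

lemma combine_injective (a : ι) (B : Finset ι) (ha : a ∉ B) :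
    Function.Injective (fun p : S a × (∀ b : B, S b) => combine a B p.1 p.2) := by
  rintro ⟨s, g⟩ ⟨s', g'⟩ h
  have h' : combine a B s g = combine a B s' g' := h
  have h1 := congrFun h' ⟨a, Finset.mem_insert_self a B⟩
  rw [combine_self, combine_self] at h1
  have h2 : g = g' := funext fun b => by
    have h3 := congrFun h' ⟨b, Finset.mem_insert_of_mem b.2⟩
    rwa [combine_of_mem a B ha s g b b.2, combine_of_mem a B ha s' g' b b.2] at h3
  rw [Prod.mk.injEq]
  exact ⟨h1, h2⟩

lemma tupleOn_insert {Ω : Type*} (X : ∀ a, Ω → S a) (a : ι) (B : Finset ι) (ha : a ∉ B)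
    (ω : Ω) : tupleOn X (insert a B) ω = combine a B (X a ω) (tupleOn X B ω) := by
  funext b
  rcases b with ⟨c, hc⟩
  by_cases h : c = a
  · subst h
    unfold combine tupleOn
    rw [dif_pos rfl]
    exact (cast_eq _ _).symm
  · unfold combine tupleOn
    rw [dif_neg h]

/-- The tuple on a singleton, as an injective image of a single value. -/
def singleTuple (a : ι) (s : S a) : ∀ b : ({a} : Finset ι), S b :=
  fun b => cast (congrArg S (Finset.mem_singleton.mp b.2).symm) s

lemma tupleOn_singleton {Ω : Type*} (X : ∀ a, Ω → S a) (a : ι) (ω : Ω) :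
    tupleOn X ({a} : Finset ι) ω = singleTuple a (X a ω) := by
  funext b
  rcases b with ⟨c, hc⟩
  have h : c = a := Finset.mem_singleton.mp hc
  subst h
  unfold singleTuple tupleOn
  exact (cast_eq _ _).symm

lemma singleTuple_injective (a : ι) : Function.Injective (singleTuple (S := S) a) := by
  intro s s' h
  have h1 := congrFun h ⟨a, Finset.mem_singleton_self a⟩
  unfold singleTuple at h1
  rwa [cast_eq, cast_eq] at h1

end Combine

end SynAux

open SynAux in
/-- Maximality of the finest partition.
For mutually independent finite-valued sources `(X_a)_{a ∈ A}` and a finite-valued target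
`Y`, every partition `P` of `A` satisfies `Syn_P(X_A → Y) ≤ Syn_{P_fine}(X_A → Y)`, where
`P_fine = {{a} : a ∈ A}` is the partition into singletons. -/
theorem synergy_maximal_at_finest_partition
    {Ω : Type*} [MeasurableSpace Ω] (μ : Measure Ω) [IsProbabilityMeasure μ]
    {ι : Type*} [Fintype ι] [DecidableEq ι]
    {S : ι → Type*} [∀ a, Fintype (S a)]
    [∀ a, MeasurableSpace (S a)] [∀ a, MeasurableSingletonClass (S a)]
    {T : Type*} [Fintype T] [MeasurableSpace T] [MeasurableSingletonClass T]
    (X : ∀ a, Ω → S a) (Y : Ω → T)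
    (hX : ∀ a, Measurable (X a)) (hY : Measurable Y)
    (hindep : ∀ f : ∀ a, S a,
      pr μ (fun ω a => X a ω) f = ∏ a, pr μ (X a) (f a))
    (P : Finset (Finset ι)) (hP : IsFinsetPartition Finset.univ P) :
    synPart μ X Finset.univ P Y
      ≤ synPart μ X Finset.univ
          (Finset.univ.image fun a : ι => ({a} : Finset ι)) Y := by
  classical
  obtain ⟨hne, hsubA, hdisj, hcover⟩ := hP
  -- measurability of fibers
  have hfX : ∀ a, ∀ s, MeasurableSet {ω | X a ω = s} := by
    intro a s
    have : {ω | X a ω = s} = X a ⁻¹' {s} := by ext ω; simp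
    rw [this]; exact hX a (measurableSet_singleton s)
  have hfY : ∀ t, MeasurableSet {ω | Y ω = t} := by
    intro t
    have : {ω | Y ω = t} = Y ⁻¹' {t} := by ext ω; simp
    rw [this]; exact hY (measurableSet_singleton t)
  have hfT : ∀ (B : Finset ι) (g : ∀ b : B, S b), MeasurableSet {ω | tupleOn X B ω = g} := by
    intro B g
    have : {ω | tupleOn X B ω = g} = ⋂ b : B, {ω | X b ω = g b} := by
      ext ω
      simp only [Set.mem_setOf_eq, Set.mem_iInter]
      constructor
      · intro h b; rw [← h]; rfl
      · intro h; funext b; exact h b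
    rw [this]
    exact MeasurableSet.iInter fun b => hfX b (g b)
  -- product over insert
  have prodIns : ∀ (a : ι) (B : Finset ι), a ∉ B → ∀ (s : S a) (g : ∀ b : B, S b),
      ∏ b ∈ (insert a B).attach, pr μ (X b) (combine a B s g b)
        = pr μ (X a) s * ∏ b ∈ B.attach, pr μ (X b) (g b) := by
    intro a B ha s g
    have hnotmem : (⟨a, Finset.mem_insert_self a B⟩ : {x // x ∈ insert a B}) ∉
        (B.attach).image
          (fun x => (⟨x.1, Finset.mem_insert_of_mem x.2⟩ : {x // x ∈ insert a B})) := by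
      intro hmem
      obtain ⟨x, -, hx⟩ := Finset.mem_image.mp hmem
      have : (x : ι) = a := congrArg Subtype.val hx
      exact ha (this ▸ x.2)
    have hinj : ∀ x ∈ B.attach, ∀ y ∈ B.attach,
        (⟨x.1, Finset.mem_insert_of_mem x.2⟩ : {z // z ∈ insert a B})
          = ⟨y.1, Finset.mem_insert_of_mem y.2⟩ → x = y := by
      intro x _ y _ h
      have h2 : (x : ι) = (y : ι) := congrArg (Subtype.val : {z // z ∈ insert a B} → ι) h
      exact Subtype.ext h2
    rw [Finset.attach_insert, Finset.prod_insert hnotmem]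
    rw [Finset.prod_image hinj]
    rw [combine_self]
    congr 1
    refine Finset.prod_congr rfl fun b _ => ?_
    rw [combine_of_mem a B ha s g b b.2]
  -- factorization of tuple probabilities, by downward induction
  have hFact : ∀ (B : Finset ι) (g : ∀ b : B, S b),
      pr μ (tupleOn X B) g = ∏ b ∈ B.attach, pr μ (X b) (g b) := by
    suffices h : ∀ (n : ℕ) (B : Finset ι), Bᶜ.card = n → ∀ g : ∀ b : B, S b,
        pr μ (tupleOn X B) g = ∏ b ∈ B.attach, pr μ (X b) (g b) by
      intro B g; exact h Bᶜ.card B rfl g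
    intro n
    induction n with
    | zero =>
      intro B hB g
      have hBuniv : B = Finset.univ := by
        have h0 : Bᶜ = ∅ := Finset.card_eq_zero.mp hB
        rwa [Finset.compl_eq_empty_iff] at h0
      subst hBuniv
      have h1 : pr μ (tupleOn X Finset.univ) g
          = pr μ (fun ω (a : ι) => X a ω) (fun a => g ⟨a, Finset.mem_univ a⟩) := by
        refine pr_congr fun ω => ?_
        constructor
        · intro h; funext a; exact congrFun h ⟨a, Finset.mem_univ a⟩
        · intro h; funext b; exact congrFun h b.1
      rw [h1, hindep]
      exact (Finset.prod_attach Finset.univ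
        (fun a => pr μ (X a) (g ⟨a, Finset.mem_univ a⟩))).symm
    | succ n ih =>
      intro B hB g
      have hBne : Bᶜ.Nonempty := Finset.card_pos.mp (by rw [hB]; exact n.succ_pos)
      obtain ⟨a, ha⟩ := hBne
      have haB : a ∉ B := Finset.mem_compl.mp ha
      have hcard : (insert a B)ᶜ.card = n := by
        rw [Finset.compl_insert, Finset.card_erase_of_mem ha, hB]
        omega
      have hins := ih (insert a B) hcard
      have h1 : pr μ (tupleOn X B) g
          = ∑ s : S a, pr μ (fun ω => (tupleOn X B ω, X a ω)) (g, s) :=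
        pr_fst g (hfT B) (hfX a)
      have h2 : ∀ s : S a, pr μ (fun ω => (tupleOn X B ω, X a ω)) (g, s)
          = pr μ (tupleOn X (insert a B)) (combine a B s g) := by
        intro s
        refine pr_congr fun ω => ?_
        rw [tupleOn_insert X a B haB ω]
        constructor
        · intro h
          rw [Prod.mk.injEq] at h
          rw [h.1, h.2]
        · intro h
          have hp := combine_injective a B haB
            (a₁ := (X a ω, tupleOn X B ω)) (a₂ := (s, g)) h
          rw [Prod.mk.injEq] at hp ⊢
          exact ⟨hp.2, hp.1⟩
      calc pr μ (tupleOn X B) g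
          = ∑ s : S a, pr μ (X a) s * ∏ b ∈ B.attach, pr μ (X b) (g b) := by
            rw [h1]
            exact Finset.sum_congr rfl fun s _ =>
              (h2 s).trans ((hins _).trans (prodIns a B haB s g))
        _ = (∑ s : S a, pr μ (X a) s) * ∏ b ∈ B.attach, pr μ (X b) (g b) :=
            (Finset.sum_mul _ _ _).symm
        _ = ∏ b ∈ B.attach, pr μ (X b) (g b) := by
            rw [sum_pr (hfX a), one_mul]
  -- pairwise independence of X a and the tuple on B
  have hpairind : ∀ (a : ι) (B : Finset ι), a ∉ B → ∀ (s : S a) (g : ∀ b : B, S b),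
      pr μ (fun ω => (X a ω, tupleOn X B ω)) (s, g)
        = pr μ (X a) s * pr μ (tupleOn X B) g := by
    intro a B ha s g
    have h2 : pr μ (fun ω => (X a ω, tupleOn X B ω)) (s, g)
        = pr μ (tupleOn X (insert a B)) (combine a B s g) := by
      refine pr_congr fun ω => ?_
      rw [tupleOn_insert X a B ha ω]
      constructor
      · intro h
        rw [Prod.mk.injEq] at h
        rw [h.1, h.2]
      · intro h
        exact combine_injective a B ha (a₁ := (X a ω, tupleOn X B ω)) (a₂ := (s, g)) h
    rw [h2, hFact, prodIns a B ha s g, ← hFact]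
  -- per-block superadditivity
  have key : ∀ B : Finset ι, ∑ a ∈ B, mutInfo μ (X a) Y ≤ mutInfo μ (tupleOn X B) Y := by
    intro B
    induction B using Finset.induction_on with
    | empty =>
      rw [Finset.sum_empty]
      haveI : Unique (∀ b : ((∅ : Finset ι) : Finset ι), S b) :=
        { default := fun b => absurd b.2 (Finset.notMem_empty _),
          uniq := fun f => funext fun b => absurd b.2 (Finset.notMem_empty _) }
      exact (mutInfo_unique (tupleOn X ∅) Y).symm.le
    | @insert a B ha ih =>
      rw [Finset.sum_insert ha]
      have hsup := mutInfo_superadd (hfX a) (hfT B) hfY (hpairind a B ha)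
      have heq : mutInfo μ (fun ω => (X a ω, tupleOn X B ω)) Y
          = mutInfo μ (tupleOn X (insert a B)) Y := by
        have hfun : tupleOn X (insert a B) = fun ω =>
            (fun p : S a × (∀ b : B, S b) => combine a B p.1 p.2)
              (X a ω, tupleOn X B ω) := by
          funext ω; exact tupleOn_insert X a B ha ω
        rw [hfun]
        exact (mutInfo_comp (U := fun ω => (X a ω, tupleOn X B ω))
          (fun p : S a × (∀ b : B, S b) => combine a B p.1 p.2)
          (combine_injective a B ha) Y).symm
      linarith
  -- the finest partition sum equals the sum over single variables
  have hfine : ∑ C ∈ Finset.univ.image (fun a : ι => ({a} : Finset ι)),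
      mutInfo μ (tupleOn X C) Y = ∑ a : ι, mutInfo μ (X a) Y := by
    rw [Finset.sum_image (fun a _ b _ h => Finset.singleton_injective h)]
    refine Finset.sum_congr rfl fun a _ => ?_
    have hfun : tupleOn X ({a} : Finset ι) = fun ω => singleTuple a (X a ω) :=
      funext fun ω => tupleOn_singleton X a ω
    rw [hfun]
    exact mutInfo_comp (singleTuple a) (singleTuple_injective a) Y
  -- partition sum
  have hcov : (Finset.univ : Finset ι) = P.biUnion id := by
    ext a
    simp only [Finset.mem_univ, true_iff, Finset.mem_biUnion, id]
    exact hcover a (Finset.mem_univ a)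
  have hsplit : ∑ a : ι, mutInfo μ (X a) Y = ∑ B ∈ P, ∑ a ∈ B, mutInfo μ (X a) Y := by
    calc ∑ a : ι, mutInfo μ (X a) Y = ∑ a ∈ P.biUnion id, mutInfo μ (X a) Y := by
          rw [← hcov]
      _ = ∑ B ∈ P, ∑ a ∈ B, mutInfo μ (X a) Y :=
          Finset.sum_biUnion (fun B hB C hC hBC => hdisj B hB C hC hBC)
  have hblocks : ∑ B ∈ P, ∑ a ∈ B, mutInfo μ (X a) Y
      ≤ ∑ B ∈ P, mutInfo μ (tupleOn X B) Y :=
    Finset.sum_le_sum fun B _ => key B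
  unfold synPart
  linarith [hsplit, hblocks, hfine]
end

section
/- Zero-synergy characterization under independent sources. Let M₁,…,M_m and Y be random variables on a probability space, each taking values in a finite type, with M₁,…,M_m mutually independent. Then I((M₁,…,M_m);Y) − Σ_{i=1}^m I(M_i;Y) = 0 if and only if for every y with P(Y=y) > 0 the conditional law of (M₁,…,M_m) given Y = y equals the product of the conditional laws of the M_i given Y = y (i.e., M₁,…,M_m are conditionally independent given Y). -/
open MeasureTheory Finset

/-- Conditional probability `P(X = s | Y = y)`. -/
noncomputable def cpr {Ω : Type*} [MeasurableSpace Ω] (μ : Measure Ω)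
    {S T : Type*} (X : Ω → S) (Y : Ω → T) (y : T) (s : S) : ℝ :=
  (μ {ω | X ω = s ∧ Y ω = y}).toReal / (μ {ω | Y ω = y}).toReal

/-- Conditional entropy `H(X|Y) = Σ_y P(Y=y) H(X | Y=y)`. -/
noncomputable def condEnt {Ω : Type*} [MeasurableSpace Ω] (μ : Measure Ω)
    {S T : Type*} [Fintype S] [Fintype T] (X : Ω → S) (Y : Ω → T) : ℝ :=
  ∑ y : T, pr μ Y y * (-∑ s : S, cpr μ X Y y s * Real.log (cpr μ X Y y s))
/-- Entropy of a distribution given as a function on a finite type. -/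
noncomputable def dEnt {S : Type*} [Fintype S] (p : S → ℝ) : ℝ :=
  -∑ s : S, p s * Real.log (p s)

/-- Mutual information of the two coordinates of a distribution on `S × T`. -/
noncomputable def dMI {S T : Type*} [Fintype S] [Fintype T] (p : S × T → ℝ) : ℝ :=
  dEnt (fun s => ∑ t : T, p (s, t)) + dEnt (fun t => ∑ s : S, p (s, t)) - dEnt p

/-- Kullback–Leibler divergence between two distributions on a finite type. -/
noncomputable def dKL {S : Type*} [Fintype S] (p q : S → ℝ) : ℝ :=
  ∑ s : S, p s * Real.log (p s / q s)

/-- Conditional mutual information `I(X;Z|Y)`. -/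
noncomputable def condMutInfo {Ω : Type*} [MeasurableSpace Ω] (μ : Measure Ω)
    {S T U : Type*} [Fintype S] [Fintype T] [Fintype U]
    (X : Ω → S) (Z : Ω → T) (Y : Ω → U) : ℝ :=
  ∑ y : U, pr μ Y y * dMI (fun xz : S × T => cpr μ (fun ω => (X ω, Z ω)) Y y xz)

namespace ZeroSyn

variable {Ω : Type*} [MeasurableSpace Ω] (μ : Measure Ω)

lemma pr_nonneg {S : Type*} (X : Ω → S) (s : S) : 0 ≤ pr μ X s := ENNReal.toReal_nonneg

lemma sum_toReal_measure [IsFiniteMeasure μ] {A : Type*} (t : Finset A) (E : A → Set Ω)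
    (hmeas : ∀ a, MeasurableSet (E a))
    (hdisj : ∀ a ∈ t, ∀ b ∈ t, a ≠ b → Disjoint (E a) (E b)) :
    ∑ a ∈ t, (μ (E a)).toReal = (μ (⋃ a ∈ t, E a)).toReal := by
  rw [measure_biUnion_finset (fun a ha b hb hab => hdisj a ha b hb hab) (fun a _ => hmeas a)]
  exact (ENNReal.toReal_sum (fun a _ => measure_ne_top μ _)).symm

lemma pr_pair {A B : Type*} (Z : Ω → A) (Y : Ω → B) (z : A) (y : B) :
    pr μ (fun ω => (Z ω, Y ω)) (z, y) = (μ {ω | Z ω = z ∧ Y ω = y}).toReal := by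
  unfold pr; congr 2; ext ω; simp [Prod.ext_iff]

lemma cpr_eq {A B : Type*} (Z : Ω → A) (Y : Ω → B) (y : B) (z : A) :
    cpr μ Z Y y z = pr μ (fun ω => (Z ω, Y ω)) (z, y) / pr μ Y y := by
  rw [pr_pair]; rfl

lemma cpr_nonneg {A B : Type*} (Z : Ω → A) (Y : Ω → B) (y : B) (z : A) :
    0 ≤ cpr μ Z Y y z :=
  div_nonneg ENNReal.toReal_nonneg ENNReal.toReal_nonneg

lemma measurableSet_eq_pair {A B : Type*} [MeasurableSpace A] [MeasurableSingletonClass A]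
    [MeasurableSpace B] [MeasurableSingletonClass B]
    {Z : Ω → A} {Y : Ω → B} (hZ : Measurable Z) (hY : Measurable Y) (z : A) (y : B) :
    MeasurableSet {ω | Z ω = z ∧ Y ω = y} :=
  (hZ (measurableSet_singleton z)).inter (hY (measurableSet_singleton y))

lemma sum_pr_pair [IsFiniteMeasure μ] {A B : Type*} [Fintype A]
    [MeasurableSpace A] [MeasurableSingletonClass A]
    [MeasurableSpace B] [MeasurableSingletonClass B]
    {Z : Ω → A} {Y : Ω → B} (hZ : Measurable Z) (hY : Measurable Y) (y : B) :
    ∑ z : A, pr μ (fun ω => (Z ω, Y ω)) (z, y) = pr μ Y y := by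
  simp only [pr_pair]
  rw [sum_toReal_measure μ univ _ (fun z => measurableSet_eq_pair hZ hY z y)
    (by
      intro a _ b _ hab
      rw [Set.disjoint_left]
      rintro ω ⟨h1, _⟩ ⟨h2, _⟩
      exact hab (h1 ▸ h2 ▸ rfl))]
  unfold pr
  congr 2
  ext ω
  simp

lemma sum_pr_pair_fiber [IsFiniteMeasure μ] {A B C : Type*} [Fintype A] [DecidableEq C]
    [MeasurableSpace A] [MeasurableSingletonClass A]
    [MeasurableSpace B] [MeasurableSingletonClass B]
    {Z : Ω → A} {Y : Ω → B} (hZ : Measurable Z) (hY : Measurable Y)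
    (g : A → C) (c : C) (y : B) :
    ∑ z ∈ univ.filter (fun z => g z = c), pr μ (fun ω => (Z ω, Y ω)) (z, y)
      = pr μ (fun ω => (g (Z ω), Y ω)) (c, y) := by
  simp only [pr_pair]
  rw [sum_toReal_measure μ _ _ (fun z => measurableSet_eq_pair hZ hY z y)
    (by
      intro a _ b _ hab
      rw [Set.disjoint_left]
      rintro ω ⟨h1, _⟩ ⟨h2, _⟩
      exact hab (h1 ▸ h2 ▸ rfl))]
  have he : (⋃ z ∈ univ.filter (fun z => g z = c), {ω | Z ω = z ∧ Y ω = y})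
      = {ω | g (Z ω) = c ∧ Y ω = y} := by
    ext ω
    simp only [Set.mem_iUnion, Finset.mem_filter, Finset.mem_univ, true_and,
      Set.mem_setOf_eq, Prod.mk.injEq]
    constructor
    · rintro ⟨z, h1, h2, h3⟩
      subst h2
      exact ⟨h1, h3⟩
    · rintro ⟨h1, h2⟩
      exact ⟨Z ω, h1, rfl, h2⟩
  rw [he]

lemma sum_pr [IsProbabilityMeasure μ] {A : Type*} [Fintype A]
    [MeasurableSpace A] [MeasurableSingletonClass A]
    {Z : Ω → A} (hZ : Measurable Z) : ∑ a : A, pr μ Z a = 1 := by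
  unfold pr
  rw [sum_toReal_measure μ univ (fun a => {ω | Z ω = a}) (fun a => hZ (measurableSet_singleton a))
    (by
      intro a _ b _ hab
      rw [Set.disjoint_left]
      intro ω h1 h2
      exact hab (h1 ▸ h2 ▸ rfl))]
  have : (⋃ a ∈ (univ : Finset A), {ω | Z ω = a}) = Set.univ := by
    ext ω; simp
  rw [this, measure_univ, ENNReal.toReal_one]

lemma sum_pr_fiber [IsFiniteMeasure μ] {A C : Type*} [Fintype A] [DecidableEq C]
    [MeasurableSpace A] [MeasurableSingletonClass A]
    {Z : Ω → A} (hZ : Measurable Z) (g : A → C) (c : C) :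
    ∑ a ∈ univ.filter (fun a => g a = c), pr μ Z a = pr μ (fun ω => g (Z ω)) c := by
  unfold pr
  rw [sum_toReal_measure μ _ (fun a => {ω | Z ω = a}) (fun a => hZ (measurableSet_singleton a))
    (by
      intro a _ b _ hab
      rw [Set.disjoint_left]
      intro ω h1 h2
      exact hab (h1 ▸ h2 ▸ rfl))]
  have he : (⋃ a ∈ univ.filter (fun a => g a = c), {ω | Z ω = a})
      = {ω | g (Z ω) = c} := by
    ext ω
    simp only [Set.mem_iUnion, Finset.mem_filter, Finset.mem_univ, true_and,
      Set.mem_setOf_eq]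
    constructor
    · rintro ⟨z, h1, h2⟩
      subst h2
      exact h1
    · intro h1
      exact ⟨Z ω, h1, rfl⟩
  rw [he]

lemma cpr_sum_one [IsProbabilityMeasure μ] {A T : Type*} [Fintype A]
    [MeasurableSpace A] [MeasurableSingletonClass A]
    [MeasurableSpace T] [MeasurableSingletonClass T]
    {Z : Ω → A} {Y : Ω → T} (hZ : Measurable Z) (hY : Measurable Y)
    {y : T} (hy : pr μ Y y ≠ 0) : ∑ z : A, cpr μ Z Y y z = 1 := by
  simp only [cpr_eq]
  rw [← Finset.sum_div, sum_pr_pair μ hZ hY y, div_self hy]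

lemma pr_pair_eq_mul [IsFiniteMeasure μ] {A B : Type*} (Z : Ω → A) (Y : Ω → B) (z : A) (y : B) :
    pr μ (fun ω => (Z ω, Y ω)) (z, y) = pr μ Y y * cpr μ Z Y y z := by
  rw [cpr_eq]
  rcases eq_or_ne (pr μ Y y) 0 with h | h
  · rw [h, zero_mul, pr_pair]
    have h0 : μ {ω | Y ω = y} = 0 := by
      unfold pr at h
      exact ((ENNReal.toReal_eq_zero_iff _).1 h).resolve_right (measure_ne_top μ _)
    have hle : μ {ω | Z ω = z ∧ Y ω = y} ≤ μ {ω | Y ω = y} :=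
      measure_mono (fun ω hω => hω.2)
    rw [le_antisymm (hle.trans_eq h0) (zero_le)]
    simp
  · field_simp

lemma log_term_nonneg {p q : ℝ} (hp : 0 ≤ p) (hq : 0 ≤ q) (hpq : q = 0 → p = 0) :
    0 ≤ q - p + p * Real.log (p / q) := by
  rcases eq_or_lt_of_le hp with h | h
  · rw [← h]; simpa using hq
  · have hq0 : q ≠ 0 := fun h0 => by simp [hpq h0] at h
    have hqpos : 0 < q := hq.lt_of_ne (Ne.symm hq0)
    have key := Real.log_le_sub_one_of_pos (div_pos hqpos h)
    have e1 : p * (q / p - 1) = q - p := by field_simp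
    have h2 : p * Real.log (q / p) ≤ q - p := by
      calc p * Real.log (q / p) ≤ p * (q / p - 1) := mul_le_mul_of_nonneg_left key h.le
        _ = q - p := e1
    have e2 : Real.log (p / q) = - Real.log (q / p) := by
      rw [← Real.log_inv, inv_div]
    rw [e2, mul_neg]
    linarith

lemma log_term_pos {p q : ℝ} (hp : 0 < p) (hq : 0 < q) (hne : p ≠ q) :
    0 < q - p + p * Real.log (p / q) := by
  have hne1 : q / p ≠ 1 := by
    intro h
    apply hne
    field_simp at h
    linarith
  have key := Real.log_lt_sub_one_of_pos (div_pos hq hp) hne1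
  have e1 : p * (q / p - 1) = q - p := by field_simp
  have h2 : p * Real.log (q / p) < q - p := by
    calc p * Real.log (q / p) < p * (q / p - 1) := (mul_lt_mul_iff_right₀ hp).2 key
      _ = q - p := e1
  have e2 : Real.log (p / q) = - Real.log (q / p) := by
    rw [← Real.log_inv, inv_div]
  rw [e2, mul_neg]
  linarith

lemma gibbs {S : Type*} [Fintype S] (p q : S → ℝ) (hp : ∀ s, 0 ≤ p s) (hq : ∀ s, 0 ≤ q s)
    (hpq : ∀ s, q s = 0 → p s = 0) (hps : ∑ s, p s = 1) (hqs : ∑ s, q s = 1) :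
    0 ≤ dKL p q ∧ (dKL p q = 0 ↔ ∀ s, p s = q s) := by
  have hrnn : ∀ s, 0 ≤ q s - p s + p s * Real.log (p s / q s) :=
    fun s => log_term_nonneg (hp s) (hq s) (hpq s)
  have hsum : ∑ s : S, (q s - p s + p s * Real.log (p s / q s)) = dKL p q := by
    unfold dKL
    rw [Finset.sum_add_distrib, Finset.sum_sub_distrib, hps, hqs]
    ring
  refine ⟨by rw [← hsum]; exact Finset.sum_nonneg fun s _ => hrnn s, ?_, ?_⟩
  · intro h0
    have hz := (Finset.sum_eq_zero_iff_of_nonneg (fun s _ => hrnn s)).1 (hsum.trans h0)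
    have hle : ∀ s, p s ≤ q s := by
      intro s
      rcases eq_or_lt_of_le (hp s) with h | h
      · rw [← h]; exact hq s
      · by_contra hlt
        have hqpos : 0 < q s := (hq s).lt_of_ne (Ne.symm fun h0 => by simp [hpq s h0] at h)
        have hne : p s ≠ q s := fun he => hlt (le_of_eq he)
        exact absurd (hz s (Finset.mem_univ s)) (ne_of_gt (log_term_pos h hqpos hne))
    intro s
    have hzero : ∑ s : S, (q s - p s) = 0 := by
      rw [Finset.sum_sub_distrib, hps, hqs]; ring
    have := (Finset.sum_eq_zero_iff_of_nonneg
      (fun s _ => sub_nonneg.2 (hle s))).1 hzero s (Finset.mem_univ s)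
    linarith
  · intro h
    unfold dKL
    apply Finset.sum_eq_zero
    intro s _
    rw [h s]
    rcases eq_or_ne (q s) 0 with h0 | h0
    · simp [h0]
    · rw [div_self h0, Real.log_one, mul_zero]

lemma entropy_pair [IsProbabilityMeasure μ] {A T : Type*} [Fintype A]
    [MeasurableSpace A] [MeasurableSingletonClass A]
    [Fintype T] [MeasurableSpace T] [MeasurableSingletonClass T]
    {Z : Ω → A} {Y : Ω → T} (hZ : Measurable Z) (hY : Measurable Y) :
    finEntropy μ (fun ω => (Z ω, Y ω))
      = finEntropy μ Y + ∑ y : T, pr μ Y y * dEnt (cpr μ Z Y y) := by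
  unfold finEntropy dEnt
  rw [Fintype.sum_prod_type, Finset.sum_comm]
  have key : ∀ y : T, ∑ z : A, pr μ (fun ω => (Z ω, Y ω)) (z, y)
        * Real.log (pr μ (fun ω => (Z ω, Y ω)) (z, y))
      = pr μ Y y * Real.log (pr μ Y y)
        + pr μ Y y * ∑ z : A, cpr μ Z Y y z * Real.log (cpr μ Z Y y z) := by
    intro y
    rcases eq_or_ne (pr μ Y y) 0 with h | h
    · have hz : ∀ z, pr μ (fun ω => (Z ω, Y ω)) (z, y) = 0 := fun z => by
        rw [pr_pair_eq_mul, h, zero_mul]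
      simp [hz, h]
    · have h1 := cpr_sum_one μ hZ hY h
      calc ∑ z : A, pr μ (fun ω => (Z ω, Y ω)) (z, y)
            * Real.log (pr μ (fun ω => (Z ω, Y ω)) (z, y))
          = ∑ z : A, (pr μ Y y * Real.log (pr μ Y y) * cpr μ Z Y y z
              + pr μ Y y * (cpr μ Z Y y z * Real.log (cpr μ Z Y y z))) := by
            refine Finset.sum_congr rfl fun z _ => ?_
            rw [pr_pair_eq_mul μ Z Y z y]
            rcases eq_or_ne (cpr μ Z Y y z) 0 with hc | hc
            · simp [hc]
            · rw [Real.log_mul h hc]; ring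
        _ = _ := by
            rw [Finset.sum_add_distrib, ← Finset.mul_sum, ← Finset.mul_sum, h1, mul_one]
  simp only [key]
  rw [Finset.sum_add_distrib]
  simp only [mul_neg]
  rw [Finset.sum_neg_distrib]
  ring

lemma prod_mul_log_prod {I : Type*} (t : Finset I) (a : I → ℝ) :
    (∏ i ∈ t, a i) * Real.log (∏ i ∈ t, a i)
      = ∑ i ∈ t, (∏ j ∈ t, a j) * Real.log (a i) := by
  by_cases h : ∀ i ∈ t, a i ≠ 0
  · rw [Real.log_prod h, Finset.mul_sum]
  · push_neg at h
    obtain ⟨i, hi, h0⟩ := h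
    rw [Finset.prod_eq_zero hi h0]
    simp

end ZeroSyn

/-- Zero-synergy characterization under independent sources.
For mutually independent finite-valued sources `M₁,…,M_m` and a finite-valued target `Y`,
the synergy `I((M₁,…,M_m);Y) − Σᵢ I(Mᵢ;Y)` vanishes if and only if for every `y` with
`P(Y=y) > 0` the conditional law of `(M₁,…,M_m)` given `Y = y` is the product of the
conditional laws of the `Mᵢ` given `Y = y`. -/
theorem zero_synergy_iff_conditionally_independent
    {Ω : Type*} [MeasurableSpace Ω] (μ : Measure Ω) [IsProbabilityMeasure μ]
    (m : ℕ) (S : Fin m → Type*) [∀ i, Fintype (S i)]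
    [∀ i, MeasurableSpace (S i)] [∀ i, MeasurableSingletonClass (S i)]
    {T : Type*} [Fintype T] [MeasurableSpace T] [MeasurableSingletonClass T]
    (M : ∀ i, Ω → S i) (Y : Ω → T)
    (hM : ∀ i, Measurable (M i)) (hY : Measurable Y)
    (hindep : ∀ f : ∀ i, S i,
      pr μ (fun ω i => M i ω) f = ∏ i, pr μ (M i) (f i)) :
    mutInfo μ (fun ω i => M i ω) Y - ∑ i, mutInfo μ (M i) Y = 0 ↔
      ∀ y : T, 0 < pr μ Y y → ∀ f : ∀ i, S i,
        cpr μ (fun ω i => M i ω) Y y f = ∏ i, cpr μ (M i) Y y (f i) := by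
  classical
  set X : Ω → ∀ i, S i := fun ω i => M i ω with hXdef
  have hXm : Measurable X := measurable_pi_lambda _ hM
  have hindep' : ∀ f : ∀ i, S i, pr μ X f = ∏ i, pr μ (M i) (f i) := hindep
  -- marginalization of the joint (unconditional)
  have hmarg0 : ∀ (i : Fin m) (s : S i),
      ∑ f ∈ univ.filter (fun f : ∀ j, S j => f i = s), pr μ X f = pr μ (M i) s := by
    intro i s
    exact ZeroSyn.sum_pr_fiber μ hXm (fun f => f i) s
  -- entropy of the joint is the sum of the entropies (independence)
  have hHX : finEntropy μ X = ∑ i, finEntropy μ (M i) := by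
    have step : ∑ f : ∀ j, S j, pr μ X f * Real.log (pr μ X f)
        = ∑ i, ∑ s : S i, pr μ (M i) s * Real.log (pr μ (M i) s) := by
      calc ∑ f : ∀ j, S j, pr μ X f * Real.log (pr μ X f)
          = ∑ f : ∀ j, S j, ∑ i, pr μ X f * Real.log (pr μ (M i) (f i)) := by
            refine Finset.sum_congr rfl fun f _ => ?_
            rw [hindep' f, ZeroSyn.prod_mul_log_prod]
        _ = ∑ i, ∑ f : ∀ j, S j, pr μ X f * Real.log (pr μ (M i) (f i)) := Finset.sum_comm
        _ = ∑ i, ∑ s : S i, pr μ (M i) s * Real.log (pr μ (M i) s) := by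
            refine Finset.sum_congr rfl fun i _ => ?_
            rw [← Finset.sum_fiberwise univ (fun f : ∀ j, S j => f i)
              (fun f => pr μ X f * Real.log (pr μ (M i) (f i)))]
            refine Finset.sum_congr rfl fun s _ => ?_
            calc ∑ f ∈ univ.filter (fun f : ∀ j, S j => f i = s),
                  pr μ X f * Real.log (pr μ (M i) (f i))
                = ∑ f ∈ univ.filter (fun f : ∀ j, S j => f i = s),
                    pr μ X f * Real.log (pr μ (M i) s) := by
                  refine Finset.sum_congr rfl fun f hf => ?_
                  rw [(Finset.mem_filter.1 hf).2]
              _ = (∑ f ∈ univ.filter (fun f : ∀ j, S j => f i = s), pr μ X f)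
                    * Real.log (pr μ (M i) s) := (Finset.sum_mul _ _ _).symm
              _ = pr μ (M i) s * Real.log (pr μ (M i) s) := by rw [hmarg0 i s]
    unfold finEntropy
    rw [step]
    exact (by rw [Finset.sum_neg_distrib])
  -- marginalization of the conditional joint
  have hmargc : ∀ (y : T) (i : Fin m) (s : S i),
      ∑ f ∈ univ.filter (fun f : ∀ j, S j => f i = s), cpr μ X Y y f
        = cpr μ (M i) Y y s := by
    intro y i s
    simp only [ZeroSyn.cpr_eq]
    rw [← Finset.sum_div]
    congr 1
    exact ZeroSyn.sum_pr_pair_fiber μ hXm hY (fun f => f i) s y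
  have hple : ∀ (y : T) (i : Fin m) (f : ∀ j, S j),
      cpr μ X Y y f ≤ cpr μ (M i) Y y (f i) := by
    intro y i f
    rw [← hmargc y i (f i)]
    exact Finset.single_le_sum (fun g _ => ZeroSyn.cpr_nonneg μ X Y y g)
      (Finset.mem_filter.2 ⟨Finset.mem_univ f, rfl⟩)
  have hqsum : ∀ y : T, pr μ Y y ≠ 0 →
      ∑ f : ∀ j, S j, ∏ i, cpr μ (M i) Y y (f i) = 1 := by
    intro y hy
    rw [← Fintype.piFinset_univ, ← Finset.prod_univ_sum]
    exact Finset.prod_eq_one fun i _ => ZeroSyn.cpr_sum_one μ (hM i) hY hy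
  -- the KL identity
  have hKL : ∀ y : T, dKL (cpr μ X Y y) (fun f : ∀ j, S j => ∏ i, cpr μ (M i) Y y (f i))
      = (∑ i, dEnt (cpr μ (M i) Y y)) - dEnt (cpr μ X Y y) := by
    intro y
    unfold dKL dEnt
    have step : ∀ f : ∀ j, S j,
        cpr μ X Y y f * Real.log (cpr μ X Y y f / ∏ i, cpr μ (M i) Y y (f i))
        = cpr μ X Y y f * Real.log (cpr μ X Y y f)
          - ∑ i, cpr μ X Y y f * Real.log (cpr μ (M i) Y y (f i)) := by
      intro f
      rcases eq_or_lt_of_le (ZeroSyn.cpr_nonneg μ X Y y f) with h | h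
      · simp [← h]
      · have hqi : ∀ i, cpr μ (M i) Y y (f i) ≠ 0 :=
          fun i => ne_of_gt (lt_of_lt_of_le h (hple y i f))
        have hqprod : (∏ i, cpr μ (M i) Y y (f i)) ≠ 0 :=
          Finset.prod_ne_zero_iff.2 fun i _ => hqi i
        rw [Real.log_div (ne_of_gt h) hqprod, Real.log_prod (fun i _ => hqi i),
          mul_sub, Finset.mul_sum]
    simp only [step]
    rw [Finset.sum_sub_distrib, Finset.sum_comm]
    have inner : ∀ i : Fin m,
        ∑ f : ∀ j, S j, cpr μ X Y y f * Real.log (cpr μ (M i) Y y (f i))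
        = ∑ s : S i, cpr μ (M i) Y y s * Real.log (cpr μ (M i) Y y s) := by
      intro i
      rw [← Finset.sum_fiberwise univ (fun f : ∀ j, S j => f i)
        (fun f => cpr μ X Y y f * Real.log (cpr μ (M i) Y y (f i)))]
      refine Finset.sum_congr rfl fun s _ => ?_
      calc ∑ f ∈ univ.filter (fun f : ∀ j, S j => f i = s),
            cpr μ X Y y f * Real.log (cpr μ (M i) Y y (f i))
          = ∑ f ∈ univ.filter (fun f : ∀ j, S j => f i = s),
              cpr μ X Y y f * Real.log (cpr μ (M i) Y y s) := by
            refine Finset.sum_congr rfl fun f hf => ?_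
            rw [(Finset.mem_filter.1 hf).2]
        _ = (∑ f ∈ univ.filter (fun f : ∀ j, S j => f i = s), cpr μ X Y y f)
              * Real.log (cpr μ (M i) Y y s) := (Finset.sum_mul _ _ _).symm
        _ = cpr μ (M i) Y y s * Real.log (cpr μ (M i) Y y s) := by rw [hmargc y i s]
    simp only [inner]
    rw [Finset.sum_neg_distrib]
    ring
  -- the synergy formula
  have e1 := ZeroSyn.entropy_pair μ hXm hY
  have e2 : ∀ i : Fin m, finEntropy μ (fun ω => (M i ω, Y ω))
      = finEntropy μ Y + ∑ y : T, pr μ Y y * dEnt (cpr μ (M i) Y y) :=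
    fun i => ZeroSyn.entropy_pair μ (hM i) hY
  have hsyn : mutInfo μ X Y - ∑ i, mutInfo μ (M i) Y
      = ∑ y : T, pr μ Y y
          * dKL (cpr μ X Y y) (fun f : ∀ j, S j => ∏ i, cpr μ (M i) Y y (f i)) := by
    unfold mutInfo
    rw [e1, hHX]
    simp only [e2, hKL]
    have simp1 : ∀ i : Fin m,
        finEntropy μ (M i) + finEntropy μ Y
          - (finEntropy μ Y + ∑ y : T, pr μ Y y * dEnt (cpr μ (M i) Y y))
        = finEntropy μ (M i) - ∑ y : T, pr μ Y y * dEnt (cpr μ (M i) Y y) :=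
      fun i => by ring
    simp only [simp1]
    rw [Finset.sum_sub_distrib]
    simp only [mul_sub, Finset.mul_sum]
    rw [Finset.sum_sub_distrib, Finset.sum_comm]
    ring
  rw [hsyn]
  -- Gibbs inequality at each y
  have hgibbs : ∀ y : T, pr μ Y y ≠ 0 →
      0 ≤ dKL (cpr μ X Y y) (fun f : ∀ j, S j => ∏ i, cpr μ (M i) Y y (f i)) ∧
      (dKL (cpr μ X Y y) (fun f : ∀ j, S j => ∏ i, cpr μ (M i) Y y (f i)) = 0 ↔
        ∀ f : ∀ j, S j, cpr μ X Y y f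
          = (fun f : ∀ j, S j => ∏ i, cpr μ (M i) Y y (f i)) f) := by
    intro y hy
    refine ZeroSyn.gibbs _ _ (fun f => ZeroSyn.cpr_nonneg μ X Y y f)
      (fun f => Finset.prod_nonneg fun i _ => ZeroSyn.cpr_nonneg μ (M i) Y y (f i))
      (fun f h0 => ?_) (ZeroSyn.cpr_sum_one μ hXm hY hy) (hqsum y hy)
    obtain ⟨i, _, hi0⟩ := Finset.prod_eq_zero_iff.1 h0
    exact le_antisymm (le_of_le_of_eq (hple y i f) hi0) (ZeroSyn.cpr_nonneg μ X Y y f)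
  have hterm : ∀ y : T, 0 ≤ pr μ Y y
      * dKL (cpr μ X Y y) (fun f : ∀ j, S j => ∏ i, cpr μ (M i) Y y (f i)) := by
    intro y
    rcases eq_or_ne (pr μ Y y) 0 with hy | hy
    · rw [hy, zero_mul]
    · exact mul_nonneg (ZeroSyn.pr_nonneg μ Y y) (hgibbs y hy).1
  constructor
  · intro h0 y hy f
    have hy' : pr μ Y y ≠ 0 := ne_of_gt hy
    have hz := (Finset.sum_eq_zero_iff_of_nonneg (fun y _ => hterm y)).1 h0 y
      (Finset.mem_univ y)
    have hKL0 : dKL (cpr μ X Y y)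
        (fun f : ∀ j, S j => ∏ i, cpr μ (M i) Y y (f i)) = 0 := by
      rcases mul_eq_zero.1 hz with h | h
      · exact absurd h hy'
      · exact h
    exact ((hgibbs y hy').2).1 hKL0 f
  · intro hcond
    apply Finset.sum_eq_zero
    intro y _
    rcases eq_or_ne (pr μ Y y) 0 with hy | hy
    · rw [hy, zero_mul]
    · have hy' : 0 < pr μ Y y := (ZeroSyn.pr_nonneg μ Y y).lt_of_ne (Ne.symm hy)
      rw [((hgibbs y hy).2).2 fun f => hcond y hy' f, mul_zero]
end

section
/- Entropy-difference form of synergy under independent sources. Let M₁,…,M_m and Y be random variables on a probability space, each taking values in a finite type, with M₁,…,M_m mutually independent. Then I((M₁,…,M_m);Y) − Σ_{i=1}^m I(M_i;Y) = Σ_y P(Y=y) · D_KL( Law((M₁,…,M_m) | Y=y) ‖ ⊗_{i=1}^m Law(M_i | Y=y) ), the sum running over y with P(Y=y) > 0. -/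
open MeasureTheory Finset

/-- Joint probability `P(X = a, Y = b)`. -/
noncomputable def jpr {Ω : Type*} [MeasurableSpace Ω] (μ : Measure Ω)
    {A B : Type*} (X : Ω → A) (Y : Ω → B) (a : A) (b : B) : ℝ :=
  (μ {ω | X ω = a ∧ Y ω = b}).toReal

lemma sum_toReal_meas {Ω : Type*} [MeasurableSpace Ω] (μ : Measure Ω) [IsFiniteMeasure μ]
    {A : Type*} [Fintype A] (Z : Ω → A) (hZ : ∀ a : A, MeasurableSet {ω | Z ω = a})
    {E : Set Ω} (hE : MeasurableSet E) (p : A → Prop) [DecidablePred p] :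
    ∑ a ∈ Finset.univ.filter p, (μ {ω | Z ω = a ∧ ω ∈ E}).toReal
      = (μ {ω | p (Z ω) ∧ ω ∈ E}).toReal := by
  have hset0 : ∀ a : A, {ω | Z ω = a ∧ ω ∈ E} = {ω | Z ω = a} ∩ E := fun a => rfl
  have hdisj : (↑(Finset.univ.filter p) : Set A).PairwiseDisjoint
      (fun a => {ω | Z ω = a} ∩ E) := by
    intro a _ b _ hab
    refine Set.disjoint_left.mpr ?_
    rintro ω ⟨(ha : Z ω = a), -⟩ ⟨(hb : Z ω = b), -⟩
    exact hab (ha.symm.trans hb)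
  have hset : {ω | p (Z ω) ∧ ω ∈ E} = ⋃ a ∈ Finset.univ.filter p, ({ω | Z ω = a} ∩ E) := by
    ext ω
    simp only [Set.mem_setOf_eq, Set.mem_iUnion, Finset.mem_filter, Finset.mem_univ,
      true_and, exists_prop, Set.mem_inter_iff]
    constructor
    · rintro ⟨hp, hEω⟩; exact ⟨Z ω, hp, rfl, hEω⟩
    · rintro ⟨a, hp, ha, hEω⟩; exact ⟨by rw [ha]; exact hp, hEω⟩
  simp only [hset0]
  rw [hset, measure_biUnion_finset hdisj (fun a _ => (hZ a).inter hE),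
    ENNReal.toReal_sum (fun a _ => measure_ne_top μ _)]

lemma sum_toReal_meas' {Ω : Type*} [MeasurableSpace Ω] (μ : Measure Ω) [IsFiniteMeasure μ]
    {A : Type*} [Fintype A] (Z : Ω → A) (hZ : ∀ a : A, MeasurableSet {ω | Z ω = a})
    (p : A → Prop) [DecidablePred p] :
    ∑ a ∈ Finset.univ.filter p, (μ {ω | Z ω = a}).toReal
      = (μ {ω | p (Z ω)}).toReal := by
  have h := sum_toReal_meas μ Z hZ MeasurableSet.univ p
  simpa [Set.mem_univ] using h


lemma synergyAux {m : ℕ} {S : Fin m → Type*} [∀ i, Fintype (S i)] [∀ i, DecidableEq (S i)]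
    {T : Type*} [Fintype T]
    (q : (∀ i, S i) → T → ℝ) (qI : ∀ i, S i → T → ℝ) (pY : T → ℝ)
    (pM : (∀ i, S i) → ℝ) (pI : ∀ i, S i → ℝ)
    (hq0 : ∀ f y, 0 ≤ q f y)
    (hsum_q_f : ∀ y, ∑ f, q f y = pY y)
    (hsum_q_y : ∀ f, ∑ y, q f y = pM f)
    (hmarg_q : ∀ i s y, ∑ f ∈ Finset.univ.filter (fun f => f i = s), q f y = qI i s y)
    (hmarg_pM : ∀ i s, ∑ f ∈ Finset.univ.filter (fun f => f i = s), pM f = pI i s)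
    (hprod : ∀ f, pM f = ∏ i, pI i (f i)) :
    (-∑ f, pM f * Real.log (pM f)) + (-∑ y, pY y * Real.log (pY y))
      - (-(∑ f, ∑ y, q f y * Real.log (q f y)))
      - ∑ i, ((-∑ s, pI i s * Real.log (pI i s)) + (-∑ y, pY y * Real.log (pY y))
          - (-(∑ s, ∑ y, qI i s y * Real.log (qI i s y))))
      = ∑ y : T, pY y * ∑ f, (q f y / pY y) *
          Real.log ((q f y / pY y) / ∏ i, (qI i (f i) y / pY y)) := by
  -- derived positivity facts
  have hpM0 : ∀ f, 0 ≤ pM f := by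
    intro f; rw [← hsum_q_y f]; exact Finset.sum_nonneg fun y _ => hq0 f y
  have hq_le_pY : ∀ f y, q f y ≤ pY y := by
    intro f y; rw [← hsum_q_f y]
    exact Finset.single_le_sum (fun g _ => hq0 g y) (Finset.mem_univ f)
  have hq_le_qI : ∀ f y i, q f y ≤ qI i (f i) y := by
    intro f y i; rw [← hmarg_q i (f i) y]
    exact Finset.single_le_sum (fun g _ => hq0 g y) (by simp)
  -- H(M) splits as sum of marginal entropies
  have hHM : ∑ f, pM f * Real.log (pM f) = ∑ i, ∑ s, pI i s * Real.log (pI i s) := by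
    have step1 : ∀ f : ∀ i, S i, pM f * Real.log (pM f)
        = ∑ i, pM f * Real.log (pI i (f i)) := by
      intro f
      rcases eq_or_lt_of_le (hpM0 f) with h | h
      · rw [← h]; simp
      · have hne : ∀ i : Fin m, pI i (f i) ≠ 0 := by
          intro i h0
          rw [hprod f, Finset.prod_eq_zero (Finset.mem_univ i) h0] at h
          exact lt_irrefl 0 h
        rw [← Finset.mul_sum, ← Real.log_prod (fun i _ => hne i), ← hprod f]
    rw [Finset.sum_congr rfl (fun f _ => step1 f), Finset.sum_comm]
    refine Finset.sum_congr rfl fun i _ => ?_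
    rw [← Finset.sum_fiberwise Finset.univ (fun f => f i)
      (fun f => pM f * Real.log (pI i (f i)))]
    refine Finset.sum_congr rfl fun s _ => ?_
    calc ∑ f ∈ Finset.univ.filter (fun f => f i = s), pM f * Real.log (pI i (f i))
        = ∑ f ∈ Finset.univ.filter (fun f => f i = s), pM f * Real.log (pI i s) := by
          refine Finset.sum_congr rfl fun f hf => ?_
          rw [(Finset.mem_filter.mp hf).2]
      _ = (∑ f ∈ Finset.univ.filter (fun f => f i = s), pM f) * Real.log (pI i s) := by
          rw [Finset.sum_mul]
      _ = pI i s * Real.log (pI i s) := by rw [hmarg_pM]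
  -- conditional version for q / qI
  have hQI : ∀ (i : Fin m) (y : T), ∑ f, q f y * Real.log (qI i (f i) y)
      = ∑ s, qI i s y * Real.log (qI i s y) := by
    intro i y
    rw [← Finset.sum_fiberwise Finset.univ (fun f => f i)
      (fun f => q f y * Real.log (qI i (f i) y))]
    refine Finset.sum_congr rfl fun s _ => ?_
    calc ∑ f ∈ Finset.univ.filter (fun f => f i = s), q f y * Real.log (qI i (f i) y)
        = ∑ f ∈ Finset.univ.filter (fun f => f i = s), q f y * Real.log (qI i s y) := by
          refine Finset.sum_congr rfl fun f hf => ?_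
          rw [(Finset.mem_filter.mp hf).2]
      _ = (∑ f ∈ Finset.univ.filter (fun f => f i = s), q f y) * Real.log (qI i s y) := by
          rw [Finset.sum_mul]
      _ = qI i s y * Real.log (qI i s y) := by rw [hmarg_q]
  -- pointwise rewriting of the KL integrand
  have hRHSterm : ∀ y f, pY y * ((q f y / pY y) *
        Real.log ((q f y / pY y) / ∏ i, (qI i (f i) y / pY y)))
      = q f y * (Real.log (q f y) + ((m : ℝ) - 1) * Real.log (pY y)
          - ∑ i, Real.log (qI i (f i) y)) := by
    intro y f
    rcases eq_or_lt_of_le (hq0 f y) with h | h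
    · rw [← h]; simp
    · have hpYpos : 0 < pY y := lt_of_lt_of_le h (hq_le_pY f y)
      have hqIpos : ∀ i : Fin m, 0 < qI i (f i) y := fun i => lt_of_lt_of_le h (hq_le_qI f y i)
      have hprodpos : 0 < ∏ i, qI i (f i) y / pY y :=
        Finset.prod_pos fun i _ => div_pos (hqIpos i) hpYpos
      have hlog : Real.log ((q f y / pY y) / ∏ i, (qI i (f i) y / pY y))
          = Real.log (q f y) + ((m : ℝ) - 1) * Real.log (pY y)
            - ∑ i, Real.log (qI i (f i) y) := by
        rw [Real.log_div (div_pos h hpYpos).ne' hprodpos.ne',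
          Real.log_div h.ne' hpYpos.ne',
          Real.log_prod (fun i _ => (div_pos (hqIpos i) hpYpos).ne'),
          Finset.sum_congr rfl (fun i _ => Real.log_div (hqIpos i).ne' hpYpos.ne'),
          Finset.sum_sub_distrib, Finset.sum_const, Finset.card_univ, Fintype.card_fin,
          nsmul_eq_mul]
        ring
      rw [hlog, div_mul_eq_mul_div, mul_comm (pY y), div_mul_cancel₀ _ hpYpos.ne']
  -- expand the inner sum for fixed y
  have hexpand : ∀ y : T, ∑ f, q f y * (Real.log (q f y)
        + ((m : ℝ) - 1) * Real.log (pY y) - ∑ i, Real.log (qI i (f i) y))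
      = (∑ f, q f y * Real.log (q f y)) + ((m : ℝ) - 1) * (pY y * Real.log (pY y))
        - ∑ i, ∑ s, qI i s y * Real.log (qI i s y) := by
    intro y
    calc ∑ f, q f y * (Real.log (q f y) + ((m : ℝ) - 1) * Real.log (pY y)
            - ∑ i, Real.log (qI i (f i) y))
        = ∑ f, (q f y * Real.log (q f y) + q f y * (((m : ℝ) - 1) * Real.log (pY y))
            - ∑ i, q f y * Real.log (qI i (f i) y)) := by
          refine Finset.sum_congr rfl fun f _ => ?_
          rw [mul_sub, mul_add, Finset.mul_sum]
      _ = (∑ f, q f y * Real.log (q f y))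
            + (∑ f, q f y * (((m : ℝ) - 1) * Real.log (pY y)))
            - ∑ f, ∑ i, q f y * Real.log (qI i (f i) y) := by
          rw [Finset.sum_sub_distrib, Finset.sum_add_distrib]
      _ = (∑ f, q f y * Real.log (q f y)) + ((m : ℝ) - 1) * (pY y * Real.log (pY y))
            - ∑ i, ∑ s, qI i s y * Real.log (qI i s y) := by
          congr 1
          · congr 1
            rw [← Finset.sum_mul, hsum_q_f y]; ring
          · rw [Finset.sum_comm]
            exact Finset.sum_congr rfl fun i _ => hQI i y
  have hRHS2 : (∑ y : T, pY y * ∑ f, (q f y / pY y) *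
        Real.log ((q f y / pY y) / ∏ i, (qI i (f i) y / pY y)))
      = (∑ f, ∑ y, q f y * Real.log (q f y))
        + ((m : ℝ) - 1) * (∑ y, pY y * Real.log (pY y))
        - ∑ i, ∑ s, ∑ y, qI i s y * Real.log (qI i s y) := by
    calc (∑ y : T, pY y * ∑ f, (q f y / pY y) *
          Real.log ((q f y / pY y) / ∏ i, (qI i (f i) y / pY y)))
        = ∑ y, ∑ f, q f y * (Real.log (q f y) + ((m : ℝ) - 1) * Real.log (pY y)
            - ∑ i, Real.log (qI i (f i) y)) := by
          refine Finset.sum_congr rfl fun y _ => ?_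
          rw [Finset.mul_sum]
          exact Finset.sum_congr rfl fun f _ => hRHSterm y f
      _ = ∑ y, ((∑ f, q f y * Real.log (q f y))
            + ((m : ℝ) - 1) * (pY y * Real.log (pY y))
            - ∑ i, ∑ s, qI i s y * Real.log (qI i s y)) :=
          Finset.sum_congr rfl fun y _ => hexpand y
      _ = (∑ y, ∑ f, q f y * Real.log (q f y))
            + ((m : ℝ) - 1) * (∑ y, pY y * Real.log (pY y))
            - ∑ y, ∑ i, ∑ s, qI i s y * Real.log (qI i s y) := by
          rw [Finset.sum_sub_distrib, Finset.sum_add_distrib, ← Finset.mul_sum]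
      _ = (∑ f, ∑ y, q f y * Real.log (q f y))
            + ((m : ℝ) - 1) * (∑ y, pY y * Real.log (pY y))
            - ∑ i, ∑ s, ∑ y, qI i s y * Real.log (qI i s y) := by
          congr 1
          · congr 1
            exact Finset.sum_comm
          · rw [Finset.sum_comm]
            exact Finset.sum_congr rfl fun i _ => Finset.sum_comm
  rw [hRHS2, hHM, Finset.sum_sub_distrib, Finset.sum_add_distrib, Finset.sum_const,
    Finset.card_univ, Fintype.card_fin, nsmul_eq_mul]
  simp only [Finset.sum_neg_distrib]
  ring

/-- Entropy-difference / KL form of synergy under independent sources.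
For mutually independent finite-valued sources `M₁,…,M_m` and a finite-valued target `Y`,
`I((M₁,…,M_m);Y) − Σᵢ I(Mᵢ;Y)
  = Σ_y P(Y=y) · D_KL( Law((M₁,…,M_m)|Y=y) ‖ ⊗ᵢ Law(Mᵢ|Y=y) )`,
the sum running over `y` with `P(Y=y) > 0`. -/
theorem synergy_eq_expected_KL_of_independent_sources
    {Ω : Type*} [MeasurableSpace Ω] (μ : Measure Ω) [IsProbabilityMeasure μ]
    (m : ℕ) (S : Fin m → Type*) [∀ i, Fintype (S i)]
    [∀ i, MeasurableSpace (S i)] [∀ i, MeasurableSingletonClass (S i)]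
    {T : Type*} [Fintype T] [MeasurableSpace T] [MeasurableSingletonClass T]
    (M : ∀ i, Ω → S i) (Y : Ω → T)
    (hM : ∀ i, Measurable (M i)) (hY : Measurable Y)
    (hindep : ∀ f : ∀ i, S i,
      pr μ (fun ω i => M i ω) f = ∏ i, pr μ (M i) (f i)) :
    mutInfo μ (fun ω i => M i ω) Y - ∑ i, mutInfo μ (M i) Y
      = ∑ y ∈ Finset.univ.filter (fun y => 0 < pr μ Y y),
          pr μ Y y *
            dKL (fun f : ∀ i, S i => cpr μ (fun ω i => M i ω) Y y f)
                (fun f : ∀ i, S i => ∏ i, cpr μ (M i) Y y (f i)) := by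
  classical
  have hMvSet : ∀ f : ∀ i, S i, MeasurableSet {ω | (fun ω i => M i ω) ω = f} := by
    intro f
    have h : {ω | (fun ω i => M i ω) ω = f} = ⋂ i, (M i) ⁻¹' {f i} := by
      ext ω; simp [funext_iff]
    rw [h]
    exact MeasurableSet.iInter fun i => (hM i) (measurableSet_singleton _)
  have hYSet : ∀ y : T, MeasurableSet {ω | Y ω = y} := fun y => hY (measurableSet_singleton _)
  have h2 : ∀ y : T, ∑ f : ∀ i, S i, jpr μ (fun ω i => M i ω) Y f y = pr μ Y y := by
    intro y
    have h := sum_toReal_meas μ (fun ω i => M i ω) hMvSet (hYSet y) (fun _ => True)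
    simp only [Finset.filter_true] at h
    calc ∑ f : ∀ i, S i, jpr μ (fun ω i => M i ω) Y f y
        = (μ {ω | True ∧ ω ∈ {ω | Y ω = y}}).toReal := h
      _ = pr μ Y y := by
          unfold pr
          rw [show {ω | True ∧ ω ∈ {ω | Y ω = y}} = {ω | Y ω = y} from by ext ω; simp]
  have h3 : ∀ f : ∀ i, S i, ∑ y : T, jpr μ (fun ω i => M i ω) Y f y
      = pr μ (fun ω i => M i ω) f := by
    intro f
    have h := sum_toReal_meas μ Y hYSet (hMvSet f) (fun _ => True)
    simp only [Finset.filter_true] at h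
    calc ∑ y : T, jpr μ (fun ω i => M i ω) Y f y
        = ∑ y : T, (μ {ω | Y ω = y ∧ ω ∈ {ω | (fun ω i => M i ω) ω = f}}).toReal := by
          refine Finset.sum_congr rfl fun y _ => ?_
          unfold jpr
          rw [show {ω | Y ω = y ∧ ω ∈ {ω | (fun ω i => M i ω) ω = f}}
              = {ω | (fun ω i => M i ω) ω = f ∧ Y ω = y} from by ext ω; exact and_comm]
      _ = (μ {ω | True ∧ ω ∈ {ω | (fun ω i => M i ω) ω = f}}).toReal := h
      _ = pr μ (fun ω i => M i ω) f := by
          unfold pr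
          rw [show {ω | True ∧ ω ∈ {ω | (fun ω i => M i ω) ω = f}}
              = {ω | (fun ω i => M i ω) ω = f} from by ext ω; simp]
  have h4 : ∀ (i : Fin m) (s : S i) (y : T),
      ∑ f ∈ Finset.univ.filter (fun f : ∀ i, S i => f i = s),
        jpr μ (fun ω i => M i ω) Y f y = jpr μ (M i) Y s y := by
    intro i s y
    exact sum_toReal_meas μ (fun ω i => M i ω) hMvSet (hYSet y) (fun f => f i = s)
  have h5 : ∀ (i : Fin m) (s : S i),
      ∑ f ∈ Finset.univ.filter (fun f : ∀ i, S i => f i = s),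
        pr μ (fun ω i => M i ω) f = pr μ (M i) s := by
    intro i s
    exact sum_toReal_meas' μ (fun ω i => M i ω) hMvSet (fun f => f i = s)
  -- entropies of the pairs
  have hpairEnt : finEntropy μ (fun ω => ((fun i => M i ω), Y ω))
      = -(∑ f : ∀ i, S i, ∑ y : T, jpr μ (fun ω i => M i ω) Y f y
          * Real.log (jpr μ (fun ω i => M i ω) Y f y)) := by
    have hpr : ∀ (f : ∀ i, S i) (y : T),
        pr μ (fun ω => ((fun i => M i ω), Y ω)) (f, y)
          = jpr μ (fun ω i => M i ω) Y f y := by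
      intro f y
      unfold pr jpr
      rw [show {ω | (fun ω => ((fun i => M i ω), Y ω)) ω = (f, y)}
          = {ω | (fun ω i => M i ω) ω = f ∧ Y ω = y} from by ext ω; simp [Prod.ext_iff]]
    unfold finEntropy
    rw [Fintype.sum_prod_type,
      Finset.sum_congr rfl fun f _ => Finset.sum_congr rfl fun y _ => by rw [hpr f y]]
  have hEntPairI : ∀ i : Fin m, finEntropy μ (fun ω => (M i ω, Y ω))
      = -(∑ s : S i, ∑ y : T, jpr μ (M i) Y s y * Real.log (jpr μ (M i) Y s y)) := by
    intro i
    have hpr : ∀ (s : S i) (y : T),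
        pr μ (fun ω => (M i ω, Y ω)) (s, y) = jpr μ (M i) Y s y := by
      intro s y
      unfold pr jpr
      rw [show {ω | (fun ω => (M i ω, Y ω)) ω = (s, y)}
          = {ω | M i ω = s ∧ Y ω = y} from by ext ω; simp [Prod.ext_iff]]
    unfold finEntropy
    rw [Fintype.sum_prod_type,
      Finset.sum_congr rfl fun s _ => Finset.sum_congr rfl fun y _ => by rw [hpr s y]]
  have hL : mutInfo μ (fun ω i => M i ω) Y - ∑ i, mutInfo μ (M i) Y
      = (-∑ f : ∀ i, S i, pr μ (fun ω i => M i ω) f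
            * Real.log (pr μ (fun ω i => M i ω) f))
        + (-∑ y : T, pr μ Y y * Real.log (pr μ Y y))
        - (-(∑ f : ∀ i, S i, ∑ y : T, jpr μ (fun ω i => M i ω) Y f y
            * Real.log (jpr μ (fun ω i => M i ω) Y f y)))
        - ∑ i, ((-∑ s : S i, pr μ (M i) s * Real.log (pr μ (M i) s))
            + (-∑ y : T, pr μ Y y * Real.log (pr μ Y y))
            - (-(∑ s : S i, ∑ y : T, jpr μ (M i) Y s y
                * Real.log (jpr μ (M i) Y s y)))) := by
    simp only [mutInfo]
    rw [hpairEnt]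
    have hper : ∀ i : Fin m,
        finEntropy μ (M i) + finEntropy μ Y - finEntropy μ (fun ω => (M i ω, Y ω))
        = (-∑ s : S i, pr μ (M i) s * Real.log (pr μ (M i) s))
          + (-∑ y : T, pr μ Y y * Real.log (pr μ Y y))
          - (-(∑ s : S i, ∑ y : T, jpr μ (M i) Y s y
              * Real.log (jpr μ (M i) Y s y))) := by
      intro i; rw [hEntPairI i]; rfl
    rw [Finset.sum_congr rfl fun i _ => hper i]
    rfl
  have hfil : (∑ y ∈ Finset.univ.filter (fun y => 0 < pr μ Y y),
        pr μ Y y * dKL (fun f : ∀ i, S i => cpr μ (fun ω i => M i ω) Y y f)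
          (fun f : ∀ i, S i => ∏ i, cpr μ (M i) Y y (f i)))
      = ∑ y : T, pr μ Y y * dKL (fun f : ∀ i, S i => cpr μ (fun ω i => M i ω) Y y f)
          (fun f : ∀ i, S i => ∏ i, cpr μ (M i) Y y (f i)) := by
    refine Finset.sum_filter_of_ne fun y _ hne => ?_
    by_contra hle
    push_neg at hle
    have h0 : pr μ Y y = 0 := le_antisymm hle ENNReal.toReal_nonneg
    exact hne (by rw [h0, zero_mul])
  have habs := synergyAux
    (q := fun (f : ∀ i, S i) (y : T) => jpr μ (fun ω i => M i ω) Y f y)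
    (qI := fun i (s : S i) (y : T) => jpr μ (M i) Y s y)
    (pY := fun y : T => pr μ Y y)
    (pM := fun f : ∀ i, S i => pr μ (fun ω i => M i ω) f)
    (pI := fun i (s : S i) => pr μ (M i) s)
    (fun f y => ENNReal.toReal_nonneg) h2 h3 h4 h5 hindep
  rw [hL, hfil]
  exact habs
end
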